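/- arXiv:2206.08815 — 4 statements merged into one kernel-verified Lean document; each statement's English description precedes it below -/
import Mathlib

section
/- For the regularised lower incomplete gamma function P, the sum over k ≥ 0 of P(2k+2, 2x) equals x - (1 - e^{-4x})/4, for all x ≥ 0. -/
open MeasureTheory Real Nat

/-- Lower incomplete gamma function `γ(a,x) = ∫₀ˣ t^(a-1) e^(-t) dt`. -/
noncomputable def lowerGamma (a x : ℝ) : ℝ := ∫ t in (0:ℝ)..x, t ^ (a - 1) * Real.exp (-t)

/-- Regularised lower incomplete gamma function `P(a,x) = γ(a,x)/Γ(a)`. -/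
noncomputable def regP (a x : ℝ) : ℝ := lowerGamma a x / Real.Gamma a

/-- The sum over `k ≥ 0` of `P(2k+2, 2x)` equals `x - (1 - e^(-4x))/4`, for all `x ≥ 0`. -/
theorem sum_regP_even_eq (x : ℝ) (hx : 0 ≤ x) :
    ∑' k : ℕ, regP (2 * (k : ℝ) + 2) (2 * x) = x - (1 - Real.exp (-(4 * x))) / 4 := by
  set y : ℝ := 2 * x with hy
  have hy0 : (0:ℝ) ≤ y := by positivity
  set μ : Measure ℝ := volume.restrict (Set.Ioc (0:ℝ) y) with hμ
  set F : ℕ → ℝ → ℝ := fun k t => t ^ (2*k+1) * Real.exp (-t) / (2*k+1)! with hF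
  -- each term is an integral
  have hterm : ∀ k : ℕ, regP (2 * (k:ℝ) + 2) y = ∫ t, F k t ∂μ := by
    intro k
    have h1 : (2 * (k:ℝ) + 2) = ((2*k+1 : ℕ) : ℝ) + 1 := by push_cast; ring
    have hG : Real.Gamma (2 * (k:ℝ) + 2) = ((2*k+1)! : ℝ) := by
      rw [h1, Real.Gamma_nat_eq_factorial]
    have hintegrand : ∀ t : ℝ,
        t ^ ((2 * (k:ℝ) + 2) - 1) * Real.exp (-t) = t ^ (2*k+1) * Real.exp (-t) := by
      intro t
      have h2 : (2 * (k:ℝ) + 2) - 1 = ((2*k+1 : ℕ) : ℝ) := by push_cast; ring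
      rw [h2, Real.rpow_natCast]
    rw [regP, lowerGamma, hG, intervalIntegral.integral_of_le hy0]
    simp_rw [hintegrand]
    rw [← integral_div]
  -- continuity and integrability
  have hcont : ∀ k : ℕ, Continuous (F k) := by
    intro k
    exact ((continuous_pow _).mul (Real.continuous_exp.comp continuous_neg)).div_const _
  have hint : ∀ k : ℕ, Integrable (F k) μ := fun k =>
    (hcont k).integrableOn_Ioc
  -- bound on the norm integrals
  have hbound : ∀ k : ℕ, (∫ t, ‖F k t‖ ∂μ) ≤ (y ^ (2*k+1) / (2*k+1)!) * y := by
    intro k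
    have h1 : ∀ t ∈ Set.Ioc (0:ℝ) y, ‖F k t‖ ≤ y ^ (2*k+1) / (2*k+1)! := by
      intro t ht
      have ht0 : 0 < t := ht.1
      have hty : t ≤ y := ht.2
      have hFnn : 0 ≤ F k t := by
        have := Real.exp_pos (-t)
        positivity
      rw [Real.norm_of_nonneg hFnn]
      have hexp : Real.exp (-t) ≤ 1 := Real.exp_le_one_iff.mpr (by linarith)
      have hpow : t ^ (2*k+1) ≤ y ^ (2*k+1) := pow_le_pow_left₀ ht0.le hty _
      calc t ^ (2*k+1) * Real.exp (-t) / (2*k+1)!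
          ≤ t ^ (2*k+1) * 1 / (2*k+1)! := by
            gcongr
        _ = t ^ (2*k+1) / (2*k+1)! := by ring
        _ ≤ y ^ (2*k+1) / (2*k+1)! := by gcongr
    calc (∫ t, ‖F k t‖ ∂μ)
        ≤ ∫ _ , y ^ (2*k+1) / (2*k+1)! ∂μ := by
          refine setIntegral_mono_on ((hint k).norm) ?_ measurableSet_Ioc h1
          exact (integrableOn_const_iff).mpr (Or.inr measure_Ioc_lt_top)
      _ = (y ^ (2*k+1) / (2*k+1)!) * y := by
          rw [setIntegral_const, smul_eq_mul, Measure.real, Real.volume_Ioc]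
          rw [ENNReal.toReal_ofReal (by linarith)]
          ring
  have hsum : Summable fun k : ℕ => ∫ t, ‖F k t‖ ∂μ := by
    have hs : Summable fun k : ℕ => (y ^ (2*k+1) / (2*k+1)!) * y := by
      have h1 : Summable fun k : ℕ => y ^ (2*k+1) / (2*k+1)! := by
        have hinj : Function.Injective (fun k : ℕ => 2*k+1) := fun a b hab => by dsimp at hab; omega
        exact (Real.summable_pow_div_factorial y).comp_injective hinj
      exact h1.mul_right y
    refine Summable.of_nonneg_of_le (fun k => ?_) hbound hs
    exact integral_nonneg fun t => norm_nonneg _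
  -- swap sum and integral
  have hswap : ∑' k : ℕ, regP (2 * (k:ℝ) + 2) y = ∫ t, (∑' k, F k t) ∂μ := by
    simp_rw [hterm]
    exact integral_tsum_of_summable_integral_norm hint hsum
  -- pointwise sum is sinh t * exp (-t)
  have hpt : ∀ t : ℝ, (∑' k, F k t) = Real.sinh t * Real.exp (-t) := by
    intro t
    have : (∑' k, F k t) = (∑' k : ℕ, t ^ (2*k+1) / (2*k+1)!) * Real.exp (-t) := by
      rw [← tsum_mul_right]
      exact tsum_congr fun k => by rw [hF]; ring
    rw [this, ← Real.sinh_eq_tsum]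
  -- final integral by FTC
  have hFTC : (∫ t, Real.sinh t * Real.exp (-t) ∂μ)
      = (y/2 + Real.exp (-2*y)/4) - (0/2 + Real.exp (-2*0)/4) := by
    rw [hμ, ← intervalIntegral.integral_of_le hy0]
    refine intervalIntegral.integral_eq_sub_of_hasDerivAt
      (f := fun t : ℝ => t/2 + Real.exp (-2*t)/4)
      (f' := fun t : ℝ => Real.sinh t * Real.exp (-t)) (fun t _ => ?_) ?_
    · have hd : HasDerivAt (fun t : ℝ => t/2 + Real.exp (-2*t)/4)
          (1/2 + Real.exp (-2*t) * (-2) /4) t := by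
        have h1 : HasDerivAt (fun t : ℝ => t/2) (1/2) t := (hasDerivAt_id t).div_const 2
        have h2 : HasDerivAt (fun t : ℝ => Real.exp (-2*t)) (Real.exp (-2*t) * (-2)) t := by
          have hlin : HasDerivAt (fun u : ℝ => (-2:ℝ) * u) (-2) t := by
            simpa using (hasDerivAt_id t).const_mul (-2:ℝ)
          exact hlin.exp
        exact h1.add (h2.div_const 4)
      refine hd.congr_deriv ?_; symm
      show Real.sinh t * Real.exp (-t) = 1/2 + Real.exp (-2*t) * (-2) /4
      have h1 : Real.exp t * Real.exp (-t) = 1 := by rw [← Real.exp_add]; simp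
      have h2 : Real.exp (-t) * Real.exp (-t) = Real.exp (-2*t) := by
        rw [← Real.exp_add]; ring_nf
      rw [Real.sinh_eq]
      linear_combination h1/2 - h2/2
    · exact ((Real.continuous_sinh.mul (Real.continuous_exp.comp continuous_neg))).intervalIntegrable 0 y
  have key : ∑' k : ℕ, regP (2 * (k:ℝ) + 2) y = (y/2 + Real.exp (-2*y)/4) - (1/4) := by
    rw [hswap]
    simp_rw [hpt]
    rw [hFTC]
    norm_num
  rw [key]
  have h4 : (-2) * y = -(4*x) := by rw [hy]; ring
  rw [h4, hy]
  ring
end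

section
/- The integral ∫_{-∞}^{∞} (1 - erf(t)²)/4 dt equals 1/√(2π). -/
open Real MeasureTheory Filter Set Topology intervalIntegral

noncomputable def erf (t : ℝ) : ℝ := (2 / Real.sqrt Real.pi) * ∫ s in (0:ℝ)..t, Real.exp (-(s ^ 2))

lemma gauss_cont : Continuous (fun s : ℝ => Real.exp (-(s ^ 2))) := by continuity

lemma gauss_int : Integrable (fun s : ℝ => Real.exp (-(s ^ 2))) := by
  simpa using integrable_exp_neg_mul_sq (by norm_num : (0:ℝ) < 1)

lemma hasDerivAt_erf (t : ℝ) :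
    HasDerivAt erf (2 / Real.sqrt Real.pi * Real.exp (-(t ^ 2))) t := by
  have h : HasDerivAt (fun u => ∫ s in (0:ℝ)..u, Real.exp (-(s ^ 2)))
      (Real.exp (-(t ^ 2))) t :=
    intervalIntegral.integral_hasDerivAt_right (gauss_int.intervalIntegrable)
      (gauss_cont.aestronglyMeasurable.stronglyMeasurableAtFilter) gauss_cont.continuousAt
  exact h.const_mul _

lemma erf_neg (t : ℝ) : erf (-t) = - erf t := by
  unfold erf
  rw [show (∫ s in (0:ℝ)..(-t), Real.exp (-(s ^ 2))) = - ∫ s in (0:ℝ)..t, Real.exp (-(s ^ 2)) from ?_, mul_neg]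
  rw [← intervalIntegral.integral_symm]
  rw [show (0:ℝ) = -0 by ring]
  rw [← intervalIntegral.integral_comp_neg (fun s => Real.exp (-(s ^ 2)))]
  simp [neg_sq]

lemma sqrtpi_pos : 0 < Real.sqrt Real.pi := Real.sqrt_pos.2 Real.pi_pos

lemma gauss_total : ∫ s : ℝ, Real.exp (-(s ^ 2)) = Real.sqrt Real.pi := by
  have := integral_gaussian 1
  simpa using this

lemma gauss_Iic_zero : ∫ s in Iic (0:ℝ), Real.exp (-(s ^ 2)) = Real.sqrt Real.pi / 2 := by
  have h1 : ∫ s in Iic (0:ℝ), Real.exp (-((-s) ^ 2)) = ∫ s in Ioi (-(0:ℝ)), Real.exp (-(s ^ 2)) :=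
    integral_comp_neg_Iic 0 (fun s => Real.exp (-(s ^ 2)))
  simp only [neg_sq, neg_zero] at h1
  rw [h1]
  have := integral_gaussian_Ioi 1
  simpa using this

lemma gauss_Iic_add_Ioi (t : ℝ) :
    (∫ s in Iic t, Real.exp (-(s ^ 2))) + (∫ s in Ioi t, Real.exp (-(s ^ 2)))
      = Real.sqrt Real.pi := by
  have := integral_add_compl (measurableSet_Iic (a := t)) gauss_int
  rw [compl_Iic] at this
  rw [this, gauss_total]

lemma erf_eq_Iic (t : ℝ) :
    erf t = 2 / Real.sqrt Real.pi * ((∫ s in Iic t, Real.exp (-(s ^ 2))) - Real.sqrt Real.pi / 2) := by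
  unfold erf
  congr 1
  rw [← gauss_Iic_zero, ← intervalIntegral.integral_Iic_sub_Iic gauss_int.integrableOn gauss_int.integrableOn]

lemma one_sub_erf (t : ℝ) :
    1 - erf t = 2 / Real.sqrt Real.pi * ∫ s in Ioi t, Real.exp (-(s ^ 2)) := by
  rw [erf_eq_Iic]
  have h := gauss_Iic_add_Ioi t
  have hπ := sqrtpi_pos.ne'
  field_simp
  linear_combination (-2) * h

lemma one_add_erf (t : ℝ) :
    1 + erf t = 2 / Real.sqrt Real.pi * ∫ s in Iic t, Real.exp (-(s ^ 2)) := by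
  rw [erf_eq_Iic]
  have hπ := sqrtpi_pos.ne'
  field_simp
  ring

lemma erf_le_one (t : ℝ) : erf t ≤ 1 := by
  have h := one_sub_erf t
  have hpos : 0 ≤ ∫ s in Ioi t, Real.exp (-(s ^ 2)) :=
    setIntegral_nonneg measurableSet_Ioi (fun s _ => (Real.exp_pos _).le)
  nlinarith [sqrtpi_pos, mul_nonneg (le_of_lt (by positivity : (0:ℝ) < 2 / Real.sqrt Real.pi)) hpos]

lemma neg_one_le_erf (t : ℝ) : -1 ≤ erf t := by
  have h := one_add_erf t
  have hpos : 0 ≤ ∫ s in Iic t, Real.exp (-(s ^ 2)) :=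
    setIntegral_nonneg measurableSet_Iic (fun s _ => (Real.exp_pos _).le)
  nlinarith [mul_nonneg (le_of_lt (by positivity : (0:ℝ) < 2 / Real.sqrt Real.pi)) hpos]

lemma abs_erf_le_one (t : ℝ) : |erf t| ≤ 1 :=
  abs_le.2 ⟨neg_one_le_erf t, erf_le_one t⟩

lemma gauss_tail_le (t : ℝ) (ht : 0 ≤ t) :
    (∫ s in Ioi t, Real.exp (-(s ^ 2)))
      ≤ Real.exp (-(t ^ 2) / 2) * Real.sqrt (2 * Real.pi) := by
  have hint2 : Integrable (fun s : ℝ => Real.exp (-(1/2) * s ^ 2)) :=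
    integrable_exp_neg_mul_sq (by norm_num)
  have step1 : (∫ s in Ioi t, Real.exp (-(s ^ 2)))
      ≤ ∫ s in Ioi t, Real.exp (-(t ^ 2) / 2) * Real.exp (-(1/2) * s ^ 2) := by
    apply setIntegral_mono_on gauss_int.integrableOn
      ((hint2.const_mul _).integrableOn) measurableSet_Ioi
    intro s hs
    rw [← Real.exp_add]
    apply Real.exp_le_exp.2
    have hst : t ≤ s := le_of_lt hs
    nlinarith [sq_nonneg (s - t)]
  have step2 : (∫ s in Ioi t, Real.exp (-(t ^ 2) / 2) * Real.exp (-(1/2) * s ^ 2))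
      ≤ ∫ s : ℝ, Real.exp (-(t ^ 2) / 2) * Real.exp (-(1/2) * s ^ 2) := by
    apply setIntegral_le_integral (hint2.const_mul _)
    filter_upwards with s using by positivity
  have step3 : (∫ s : ℝ, Real.exp (-(t ^ 2) / 2) * Real.exp (-(1/2) * s ^ 2))
      = Real.exp (-(t ^ 2) / 2) * Real.sqrt (2 * Real.pi) := by
    rw [MeasureTheory.integral_const_mul, integral_gaussian]
    norm_num
    ring
  linarith

lemma one_sub_erf_sq_nonneg (t : ℝ) : 0 ≤ 1 - erf t ^ 2 := by
  nlinarith [abs_erf_le_one t, sq_abs (erf t), abs_nonneg (erf t)]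

lemma one_sub_erf_sq_le (t : ℝ) :
    1 - erf t ^ 2 ≤ (4 / Real.sqrt Real.pi * Real.sqrt (2 * Real.pi)) * Real.exp (-(t ^ 2) / 2) := by
  have key : ∀ u : ℝ, 0 ≤ u →
      1 - erf u ^ 2 ≤ (4 / Real.sqrt Real.pi * Real.sqrt (2 * Real.pi)) * Real.exp (-(u ^ 2) / 2) := by
    intro u hu
    have h1 : 1 - erf u ≤ 2 / Real.sqrt Real.pi * (Real.exp (-(u ^ 2) / 2) * Real.sqrt (2 * Real.pi)) := by
      rw [one_sub_erf]
      apply mul_le_mul_of_nonneg_left (gauss_tail_le u hu) (by positivity)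
    have h2 : 1 - erf u ^ 2 ≤ 2 * (1 - erf u) := by
      nlinarith [erf_le_one u, neg_one_le_erf u]
    calc 1 - erf u ^ 2 ≤ 2 * (1 - erf u) := h2
      _ ≤ 2 * (2 / Real.sqrt Real.pi * (Real.exp (-(u ^ 2) / 2) * Real.sqrt (2 * Real.pi))) := by
          linarith [mul_le_mul_of_nonneg_left h1 (by norm_num : (0:ℝ) ≤ 2)]
      _ = (4 / Real.sqrt Real.pi * Real.sqrt (2 * Real.pi)) * Real.exp (-(u ^ 2) / 2) := by ring
  rcases le_or_gt 0 t with ht | ht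
  · exact key t ht
  · have := key (-t) (by linarith)
    rw [erf_neg, neg_sq] at this
    simpa using this

lemma erf_continuous : Continuous erf := by
  have : Differentiable ℝ erf := fun t => (hasDerivAt_erf t).differentiableAt
  exact this.continuous

lemma integrand_integrable : Integrable (fun t : ℝ => (1 - erf t ^ 2) / 4) := by
  have hg : Integrable (fun t : ℝ => (4 / Real.sqrt Real.pi * Real.sqrt (2 * Real.pi)) / 4
      * Real.exp (-(1/2) * t ^ 2)) :=
    (integrable_exp_neg_mul_sq (by norm_num : (0:ℝ) < 1/2)).const_mul _
  apply hg.mono'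
  · exact ((continuous_const.sub (erf_continuous.pow 2)).div_const 4).aestronglyMeasurable
  · filter_upwards with t
    rw [Real.norm_eq_abs, abs_of_nonneg (by linarith [one_sub_erf_sq_nonneg t] : (0:ℝ) ≤ (1 - erf t ^ 2)/4)]
    have := one_sub_erf_sq_le t
    have heq : -(t ^ 2) / 2 = -(1/2) * t ^ 2 := by ring
    rw [heq] at this
    linarith

lemma erf_tendsto_atTop : Tendsto erf atTop (𝓝 1) := by
  have h : Tendsto (fun t : ℝ => ∫ s in (0:ℝ)..t, Real.exp (-(s ^ 2))) atTop
      (𝓝 (∫ s in Ioi (0:ℝ), Real.exp (-(s ^ 2)))) :=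
    intervalIntegral_tendsto_integral_Ioi 0 gauss_int.integrableOn tendsto_id
  have h2 : (∫ s in Ioi (0:ℝ), Real.exp (-(s ^ 2))) = Real.sqrt Real.pi / 2 := by
    have := integral_gaussian_Ioi 1
    simpa using this
  have h3 := (h.const_mul (2 / Real.sqrt Real.pi))
  rw [h2] at h3
  have : 2 / Real.sqrt Real.pi * (Real.sqrt Real.pi / 2) = 1 := by
    field_simp
  rw [this] at h3
  exact h3

lemma odd_tendsto_atBot {g : ℝ → ℝ} {L : ℝ} (hodd : ∀ t, g (-t) = - g t)
    (htop : Tendsto g atTop (𝓝 L)) : Tendsto g atBot (𝓝 (-L)) := by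
  have h1 : Tendsto (fun t : ℝ => g (-t)) atBot (𝓝 L) :=
    htop.comp tendsto_neg_atBot_atTop
  have h2 : Tendsto (fun t : ℝ => - g t) atBot (𝓝 L) := by
    simpa only [hodd] using h1
  simpa using h2.neg

lemma erf_tendsto_atBot : Tendsto erf atBot (𝓝 (-1)) :=
  odd_tendsto_atBot erf_neg erf_tendsto_atTop

lemma tendsto_mul_one_sub_erf_sq_atTop :
    Tendsto (fun t : ℝ => t * (1 - erf t ^ 2)) atTop (𝓝 0) := by
  set C : ℝ := 4 / Real.sqrt Real.pi * Real.sqrt (2 * Real.pi) with hC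
  have hC0 : 0 ≤ C := by positivity
  have hg : Tendsto (fun t : ℝ => C * (t ^ 1 * Real.exp (-t))) atTop (𝓝 (C * 0)) :=
    (tendsto_pow_mul_exp_neg_atTop_nhds_zero 1).const_mul C
  rw [mul_zero] at hg
  apply squeeze_zero' ?_ ?_ hg
  · filter_upwards [eventually_ge_atTop (0:ℝ)] with t ht
    exact mul_nonneg ht (one_sub_erf_sq_nonneg t)
  · filter_upwards [eventually_ge_atTop (2:ℝ)] with t ht
    have h1 : 1 - erf t ^ 2 ≤ C * Real.exp (-(t ^ 2) / 2) := one_sub_erf_sq_le t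
    have h2 : Real.exp (-(t ^ 2) / 2) ≤ Real.exp (-t) := by
      apply Real.exp_le_exp.2
      nlinarith
    calc t * (1 - erf t ^ 2) ≤ t * (C * Real.exp (-(t ^ 2) / 2)) := by
          apply mul_le_mul_of_nonneg_left h1 (by linarith)
      _ ≤ t * (C * Real.exp (-t)) := by
          apply mul_le_mul_of_nonneg_left _ (by linarith)
          exact mul_le_mul_of_nonneg_left h2 hC0
      _ = C * (t ^ 1 * Real.exp (-t)) := by ring

lemma tendsto_exp_erf_atTop :
    Tendsto (fun t : ℝ => Real.exp (-(t ^ 2)) * erf t) atTop (𝓝 0) := by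
  apply squeeze_zero_norm' ?_ (Real.tendsto_exp_neg_atTop_nhds_zero)
  filter_upwards [eventually_ge_atTop (1:ℝ)] with t ht
  rw [Real.norm_eq_abs, abs_mul, Real.abs_exp]
  calc Real.exp (-(t ^ 2)) * |erf t| ≤ Real.exp (-(t ^ 2)) * 1 :=
        mul_le_mul_of_nonneg_left (abs_erf_le_one t) (Real.exp_pos _).le
    _ ≤ Real.exp (-t) := by
        rw [mul_one]
        apply Real.exp_le_exp.2
        nlinarith

lemma tendsto_erf_sqrt2_atTop :
    Tendsto (fun t : ℝ => erf (Real.sqrt 2 * t)) atTop (𝓝 1) := by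
  apply erf_tendsto_atTop.comp
  exact Tendsto.const_mul_atTop (Real.sqrt_pos.2 (by norm_num)) tendsto_id

noncomputable def H (t : ℝ) : ℝ :=
  (t * (1 - erf t ^ 2) - 2 / Real.sqrt Real.pi * (Real.exp (-(t ^ 2)) * erf t)
    + 2 / Real.sqrt Real.pi / Real.sqrt 2 * erf (Real.sqrt 2 * t)) / 4

lemma H_neg (t : ℝ) : H (-t) = - H t := by
  unfold H
  rw [show Real.sqrt 2 * (-t) = -(Real.sqrt 2 * t) by ring, erf_neg, erf_neg, neg_sq]
  ring

lemma H_tendsto_atTop :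
    Tendsto H atTop (𝓝 (2 / Real.sqrt Real.pi / Real.sqrt 2 / 4)) := by
  unfold H
  have h := ((tendsto_mul_one_sub_erf_sq_atTop.sub
      (tendsto_exp_erf_atTop.const_mul (2 / Real.sqrt Real.pi))).add
      (tendsto_erf_sqrt2_atTop.const_mul (2 / Real.sqrt Real.pi / Real.sqrt 2))).div_const 4
  simpa using h

lemma hasDerivAt_H (t : ℝ) : HasDerivAt H ((1 - erf t ^ 2) / 4) t := by
  have hπ := sqrtpi_pos.ne'
  have h2 : (Real.sqrt 2 : ℝ) ≠ 0 := by positivity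
  have hsq : HasDerivAt (fun t : ℝ => Real.exp (-(t ^ 2)))
      (Real.exp (-(t ^ 2)) * (-(2 * t ^ 1))) t := by
    exact ((hasDerivAt_pow 2 t).neg).exp.congr_deriv (by simp only [Pi.neg_apply]; push_cast; ring)
  have h1 : HasDerivAt (fun t : ℝ => t * (1 - erf t ^ 2))
      (1 * (1 - erf t ^ 2) + t * (0 - 2 * erf t ^ 1 * (2 / Real.sqrt Real.pi * Real.exp (-(t ^ 2))))) t :=
    (hasDerivAt_id t).mul ((hasDerivAt_const t 1).sub ((hasDerivAt_erf t).pow 2))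
  have h3 : HasDerivAt (fun t : ℝ => 2 / Real.sqrt Real.pi * (Real.exp (-(t ^ 2)) * erf t))
      (2 / Real.sqrt Real.pi * (Real.exp (-(t ^ 2)) * (-(2 * t ^ 1)) * erf t
        + Real.exp (-(t ^ 2)) * (2 / Real.sqrt Real.pi * Real.exp (-(t ^ 2))))) t :=
    (hsq.mul (hasDerivAt_erf t)).const_mul _
  have h4 : HasDerivAt (fun t : ℝ => erf (Real.sqrt 2 * t))
      (2 / Real.sqrt Real.pi * Real.exp (-((Real.sqrt 2 * t) ^ 2)) * Real.sqrt 2) t := by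
    have hin : HasDerivAt (fun t : ℝ => Real.sqrt 2 * t) (Real.sqrt 2) t := by
      simpa using (hasDerivAt_id t).const_mul (Real.sqrt 2)
    exact (hasDerivAt_erf (Real.sqrt 2 * t)).comp t hin
  have h5 := h4.const_mul (2 / Real.sqrt Real.pi / Real.sqrt 2)
  have htot := ((h1.sub h3).add h5).div_const 4
  have hexp : Real.exp (-((Real.sqrt 2 * t) ^ 2)) = Real.exp (-(t ^ 2)) * Real.exp (-(t ^ 2)) := by
    rw [← Real.exp_add]
    congr 1
    rw [mul_pow, Real.sq_sqrt (by norm_num : (0:ℝ) ≤ 2)]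
    ring
  have hpp : Real.sqrt Real.pi ^ 2 = Real.pi := Real.sq_sqrt Real.pi_pos.le
  refine htot.congr_deriv ?_
  symm
  rw [hexp]
  field_simp
  ring

/-- `∫_{-∞}^{∞} (1 - erf(t)²)/4 dt = 1/√(2π)`. -/
theorem integral_one_sub_erf_sq :
    ∫ t : ℝ, (1 - erf t ^ 2) / 4 = 1 / Real.sqrt (2 * Real.pi) := by
  have hbot : Tendsto H atBot (𝓝 (-(2 / Real.sqrt Real.pi / Real.sqrt 2 / 4))) :=
    odd_tendsto_atBot H_neg H_tendsto_atTop
  have hkey := integral_of_hasDerivAt_of_tendsto hasDerivAt_H integrand_integrable hbot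
    H_tendsto_atTop
  rw [hkey, Real.sqrt_mul (by norm_num : (0:ℝ) ≤ 2) Real.pi]
  have hπ := sqrtpi_pos.ne'
  have h2 : (Real.sqrt 2 : ℝ) ≠ 0 := by positivity
  field_simp
  ring
end

section
/- For the complex Ginibre ensemble with potential Q(z)=|z|², the expected number of eigenvalues in the disc of radius a satisfies E_N^{(2)}(a) = Σ_{k=0}^{N-1} P(k+1, N a²) = N a² + N(1-a²) P(N, N a²) - (N a²)^N e^{-N a²}/(N-1)!. -/
open Finset Real

lemma sumderiv (n : ℕ) (t : ℝ) :
    HasDerivAt (fun t : ℝ => ∑ j ∈ range (n+1), t ^ j / j.factorial)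
      (∑ j ∈ range n, t ^ j / j.factorial) t := by
  have h : HasDerivAt (fun t : ℝ => ∑ j ∈ range (n+1), t ^ j / j.factorial)
      (∑ j ∈ range (n+1), (j : ℝ) * t ^ (j-1) / j.factorial) t := by
    apply HasDerivAt.fun_sum
    intro j _
    simpa using (hasDerivAt_pow j t).div_const (j.factorial : ℝ)
  convert h using 1
  rw [Finset.sum_range_succ']
  simp only [Nat.add_sub_cancel, Nat.factorial_succ]
  rw [eq_comm]
  simp only [Nat.cast_zero, zero_mul, zero_div, add_zero]
  apply Finset.sum_congr rfl
  intro j _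
  have hj : (j.factorial : ℝ) ≠ 0 := Nat.cast_ne_zero.mpr j.factorial_ne_zero
  push_cast
  field_simp

lemma lg_eq (n : ℕ) (x : ℝ) :
    (∫ t in (0:ℝ)..x, t ^ n * Real.exp (-t))
      = n.factorial * (1 - Real.exp (-x) * ∑ j ∈ range (n+1), x ^ j / j.factorial) := by
  have key : ∀ t : ℝ, HasDerivAt
      (fun t : ℝ => -(Real.exp (-t) * (n.factorial * ∑ j ∈ range (n+1), t ^ j / j.factorial)))
      (t ^ n * Real.exp (-t)) t := by
    intro t
    have he : HasDerivAt (fun t : ℝ => Real.exp (-t)) (-Real.exp (-t)) t := by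
      have h := (hasDerivAt_neg t).exp
      rw [mul_neg_one] at h
      exact h
    have hg := (sumderiv n t).const_mul (n.factorial : ℝ)
    have := (he.mul hg).neg
    refine this.congr_deriv ?_
    have hsplit : (∑ j ∈ range (n+1), t ^ j / j.factorial)
        = (∑ j ∈ range n, t ^ j / j.factorial) + t ^ n / n.factorial :=
      Finset.sum_range_succ _ n
    have hn : (n.factorial : ℝ) ≠ 0 := Nat.cast_ne_zero.mpr n.factorial_ne_zero
    rw [hsplit]
    field_simp
    ring
  have hint : IntervalIntegrable (fun t : ℝ => t ^ n * Real.exp (-t)) MeasureTheory.volume 0 x :=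
    (Continuous.mul (continuous_pow n) (Real.continuous_exp.comp continuous_neg)).intervalIntegrable 0 x
  rw [intervalIntegral.integral_eq_sub_of_hasDerivAt (fun t _ => key t) hint]
  simp [Finset.sum_range_succ']
  ring

lemma regP_eq (n : ℕ) (x : ℝ) :
    regP ((n : ℝ) + 1) x = 1 - Real.exp (-x) * ∑ j ∈ range (n+1), x ^ j / j.factorial := by
  have h1 : lowerGamma ((n : ℝ) + 1) x = ∫ t in (0:ℝ)..x, t ^ n * Real.exp (-t) := by
    unfold lowerGamma
    apply intervalIntegral.integral_congr
    intro t _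
    simp [Real.rpow_natCast]
  have hn : (n.factorial : ℝ) ≠ 0 := Nat.cast_ne_zero.mpr n.factorial_ne_zero
  rw [regP, h1, lg_eq, Real.Gamma_nat_eq_factorial, mul_div_cancel_left₀ _ hn]

lemma sum_key (m : ℕ) (hm : 1 ≤ m) (x : ℝ) :
    ∑ k ∈ range m, ∑ j ∈ range (k+1), x ^ j / j.factorial
      = ((m : ℝ) - x) * (∑ j ∈ range m, x ^ j / j.factorial) + x ^ m / (m-1).factorial := by
  induction m, hm using Nat.le_induction with
  | base => simp
  | succ m hm ih =>
    rw [Finset.sum_range_succ, ih]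
    have h1 : (m + 1 - 1 : ℕ) = m := rfl
    have h2 : ((m-1).factorial : ℝ) * m = m.factorial := by
      rw [← Nat.cast_mul, mul_comm, Nat.mul_factorial_pred (by omega)]
    have hn : (m.factorial : ℝ) ≠ 0 := Nat.cast_ne_zero.mpr m.factorial_ne_zero
    have hn1 : ((m-1).factorial : ℝ) ≠ 0 := Nat.cast_ne_zero.mpr (m-1).factorial_ne_zero
    have h4 : ∀ y : ℝ, y / ((m-1).factorial : ℝ) = (m : ℝ) * y / m.factorial := by
      intro y
      rw [div_eq_div_iff hn1 hn, ← h2]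
      ring
    rw [h1, Finset.sum_range_succ, h4]
    push_cast
    ring

/-- Expected number of complex Ginibre eigenvalues in the disc of radius `a`:
`E_N^{(2)}(a) = Σ_{k=0}^{N-1} P(k+1, N a²)
 = N a² + N(1-a²) P(N, N a²) - (N a²)^N e^{-N a²}/(N-1)!`. -/
theorem ginibre_expected_number (N : ℕ) (hN : 0 < N) (a : ℝ) (ha : 0 ≤ a) :
    ∑ k ∈ Finset.range N, regP ((k : ℝ) + 1) (N * a ^ 2)
      = N * a ^ 2 + N * (1 - a ^ 2) * regP (N : ℝ) (N * a ^ 2)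
        - (N * a ^ 2) ^ N * Real.exp (-(N * a ^ 2)) / (Nat.factorial (N - 1) : ℝ) := by
  obtain ⟨m, rfl⟩ : ∃ m, N = m + 1 := ⟨N - 1, (Nat.succ_pred_eq_of_pos hN).symm⟩
  have hcast : ((m + 1 : ℕ) : ℝ) = (m : ℝ) + 1 := by push_cast; ring
  simp only [regP_eq, hcast]
  have hs := sum_key (m+1) (by omega) (((m:ℝ)+1) * a^2)
  push_cast at hs
  rw [Finset.sum_sub_distrib, ← Finset.mul_sum, Finset.sum_const, hs]
  simp only [Finset.card_range]
  push_cast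
  ring
end

section
/- Small-argument asymptotics of a Meijer G-function: for m ≥ 1 and j ≥ 1, as z → 0⁺, G^{m,1}_{1,m+1}(1; j,...,j, 0 | z) = ((-1)^{m-1}/(j (m-1)!)) (log z)^{m-1} z^j + O((log z)^{m-2} z^j) for m ≥ 2 (and + O(z^{j+1}) for m = 1), where j is repeated m times. -/
open MeasureTheory Asymptotics Filter

open Set

/-- `meijerG00 m` is the Meijer G-function `G^{m+1,0}_{0,m+1}(x | 0,…,0)`, defined
via iterated Mellin convolution of `e^{-x}`. -/
noncomputable def meijerG00 : ℕ → ℝ → ℝ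
  | 0 => fun x => Real.exp (-x)
  | (m + 1) => fun x => ∫ t in Set.Ioi (0:ℝ), meijerG00 m (x / t) * Real.exp (-t) / t

/-- The Meijer G-function `G^{m,1}_{1,m+1}(1; j,…,j, 0 | z)` in its equivalent
integral representation `∫₀^z G^{m,0}_{0,m}(u) u^{j-1} du`. -/
noncomputable def meijerGj (m j : ℕ) (z : ℝ) : ℝ :=
  ∫ u in (0:ℝ)..z, meijerG00 (m - 1) u * u ^ (j - 1)

lemma mg_meas (m : ℕ) : Measurable (meijerG00 m) := by
  induction m with
  | zero => exact (Real.continuous_exp.comp continuous_neg).measurable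
  | succ m ih =>
    have hF : StronglyMeasurable (fun p : ℝ × ℝ => meijerG00 m (p.1 / p.2) * Real.exp (-p.2) / p.2) := by
      refine Measurable.stronglyMeasurable ?_
      exact ((ih.comp (measurable_fst.div measurable_snd)).mul
        ((Real.continuous_exp.comp continuous_neg).measurable.comp measurable_snd)).div
        measurable_snd
    have := hF.integral_prod_right' (ν := volume.restrict (Ioi (0:ℝ)))
    exact this.measurable

lemma mg_nonneg (m : ℕ) (x : ℝ) : 0 ≤ meijerG00 m x := by
  induction m generalizing x with
  | zero => exact (Real.exp_pos _).le
  | succ m ih =>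
    refine setIntegral_nonneg measurableSet_Ioi (fun t ht => ?_)
    have ht0 : (0:ℝ) < t := ht
    exact div_nonneg (mul_nonneg (ih _) (Real.exp_pos _).le) ht0.le

lemma mg_le (m : ℕ) : ∀ y : ℝ, 0 < y → meijerG00 m y ≤ 1 / y := by
  induction m with
  | zero =>
    intro y hy
    show Real.exp (-y) ≤ 1 / y
    rw [le_div_iff₀ hy, Real.exp_neg, inv_mul_le_iff₀ (Real.exp_pos y)]
    nlinarith [Real.add_one_le_exp y]
  | succ m ih =>
    intro x hx
    show (∫ t in Set.Ioi (0:ℝ), meijerG00 m (x / t) * Real.exp (-t) / t) ≤ 1 / x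
    have hgint : Integrable (fun t => Real.exp (-t) / x) (volume.restrict (Ioi (0:ℝ))) := by
      simpa using (exp_neg_integrableOn_Ioi 0 one_pos).div_const x
    have h := integral_mono_of_nonneg (f := fun t => meijerG00 m (x / t) * Real.exp (-t) / t)
      (g := fun t => Real.exp (-t) / x) (μ := volume.restrict (Ioi (0:ℝ)))
      ?_ hgint ?_
    · refine h.trans ?_
      rw [integral_div, integral_exp_neg_Ioi_zero]
    · filter_upwards [ae_restrict_mem measurableSet_Ioi] with t ht
      have ht0 : (0:ℝ) < t := ht
      exact div_nonneg (mul_nonneg (mg_nonneg m _) (Real.exp_pos _).le) ht0.le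
    · filter_upwards [ae_restrict_mem measurableSet_Ioi] with t ht
      have ht0 : (0:ℝ) < t := ht
      have h1 : meijerG00 m (x / t) ≤ 1 / (x / t) := ih _ (by positivity)
      have h2 : (1:ℝ) / (x / t) = t / x := by field_simp
      calc meijerG00 m (x / t) * Real.exp (-t) / t
          ≤ (t / x) * Real.exp (-t) / t := by
            rw [h2] at h1
            have := Real.exp_pos (-t)
            gcongr
        _ = Real.exp (-t) / x := by field_simp
  
lemma mg_kernel_int (m : ℕ) {x : ℝ} (hx : 0 < x) :
    IntegrableOn (fun t => meijerG00 m (x / t) * Real.exp (-t) / t) (Ioi (0:ℝ)) := by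
  have hmeas : Measurable (fun t : ℝ => meijerG00 m (x / t) * Real.exp (-t) / t) :=
    (((mg_meas m).comp ((measurable_const (a := x)).div measurable_id)).mul
      ((Real.continuous_exp.comp continuous_neg).measurable)).div measurable_id
  have hgint : Integrable (fun t => Real.exp (-t) / x) (volume.restrict (Ioi (0:ℝ))) := by
    simpa using (exp_neg_integrableOn_Ioi 0 one_pos).div_const x
  refine Integrable.mono' hgint hmeas.aestronglyMeasurable ?_
  filter_upwards [ae_restrict_mem measurableSet_Ioi] with t ht
  have ht0 : (0:ℝ) < t := ht
  have h1 : meijerG00 m (x / t) ≤ t / x := by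
    have := mg_le m (x / t) (by positivity)
    rwa [one_div_div] at this
  rw [Real.norm_eq_abs, abs_of_nonneg
    (div_nonneg (mul_nonneg (mg_nonneg m _) (Real.exp_pos _).le) ht0.le)]
  calc meijerG00 m (x / t) * Real.exp (-t) / t ≤ (t / x) * Real.exp (-t) / t := by
        have := Real.exp_pos (-t); gcongr
    _ = Real.exp (-t) / x := by field_simp

/-- `(1+t)^m e^{-t}` is integrable on `(0,∞)`. -/
lemma int_B (m : ℕ) : IntegrableOn (fun t : ℝ => (1+t)^m * Real.exp (-t)) (Ioi (0:ℝ)) := by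
  have h1 : IntegrableOn (fun t : ℝ => t ^ m * Real.exp (-t)) (Ioi (0:ℝ)) := by
    have h := Real.GammaIntegral_convergent (s := (m:ℝ)+1) (by positivity)
    refine h.congr_fun (fun x hx => ?_) measurableSet_Ioi
    rw [show (m:ℝ)+1-1 = (m:ℝ) by ring]
    simp only [Real.rpow_natCast]
    ring
  have h2 : IntegrableOn (fun t : ℝ => Real.exp (-t)) (Ioi (0:ℝ)) := by
    simpa using exp_neg_integrableOn_Ioi 0 one_pos
  have hg : IntegrableOn (fun t : ℝ => 2^m * Real.exp (-t) + 2^m * (t^m * Real.exp (-t))) (Ioi (0:ℝ)) :=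
    (h2.const_mul _).add (h1.const_mul _)
  refine Integrable.mono' hg ?_ ?_
  · exact (((continuous_const.add continuous_id).pow m).mul
      (Real.continuous_exp.comp continuous_neg)).measurable.aestronglyMeasurable
  · filter_upwards [ae_restrict_mem measurableSet_Ioi] with t ht
    have ht0 : (0:ℝ) < t := ht
    rw [Real.norm_eq_abs, abs_of_nonneg (by positivity)]
    have hkey : (1+t)^m ≤ 2^m * (1 + t^m) := by
      rcases le_total t 1 with h | h
      · have : (1+t)^m ≤ 2^m := pow_le_pow_left₀ (by linarith) (by linarith) m
        nlinarith [pow_nonneg ht0.le m, pow_pos (show (0:ℝ) < 2 by norm_num) m]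
      · have : (1+t)^m ≤ (2*t)^m := pow_le_pow_left₀ (by linarith) (by linarith) m
        rw [mul_pow] at this
        nlinarith [pow_pos (show (0:ℝ) < 2 by norm_num) m]
    nlinarith [Real.exp_pos (-t), mul_le_mul_of_nonneg_right hkey (Real.exp_pos (-t)).le]

/-- `(1 - log u)^k` is integrable on `(0,1]`. -/
lemma int_log_pow (k : ℕ) : IntegrableOn (fun u : ℝ => (1 - Real.log u)^k) (Ioc (0:ℝ) 1) := by
  have hg : IntegrableOn (fun u : ℝ => (2^k * k.factorial * Real.exp (1/2)) * u ^ (-(1/2) : ℝ))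
      (Ioc (0:ℝ) 1) := by
    refine Integrable.const_mul ?_ _
    have := intervalIntegral.intervalIntegrable_rpow' (a := 0) (b := 1)
      (r := -(1/2)) (by norm_num)
    rwa [intervalIntegrable_iff_integrableOn_Ioc_of_le zero_le_one] at this
  refine Integrable.mono' hg ?_ ?_
  · exact ((measurable_const.sub Real.measurable_log).pow_const k).aestronglyMeasurable
  · filter_upwards [ae_restrict_mem measurableSet_Ioc] with u hu
    have hu0 : (0:ℝ) < u := hu.1
    have hlog : Real.log u ≤ 0 := Real.log_nonpos hu0.le hu.2
    rw [Real.norm_eq_abs, abs_of_nonneg (pow_nonneg (by linarith) k)]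
    have h1 : ((1 - Real.log u)/2)^k / k.factorial ≤ Real.exp ((1 - Real.log u)/2) :=
      Real.pow_div_factorial_le_exp _ (show (0:ℝ) ≤ (1 - Real.log u)/2 by linarith) k
    have h2 : Real.exp ((1 - Real.log u)/2) = Real.exp (1/2) * u ^ (-(1/2) : ℝ) := by
      rw [Real.rpow_def_of_pos hu0, ← Real.exp_add]
      congr 1
      ring
    have h3 : (1 - Real.log u)^k = 2^k * ((1 - Real.log u)/2)^k := by
      rw [div_pow, ← mul_div_assoc, mul_comm, mul_div_assoc, div_self (by positivity), mul_one]
    rw [h3]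
    have hfac : (0:ℝ) < k.factorial := by positivity
    calc (2:ℝ)^k * ((1 - Real.log u)/2)^k
        ≤ 2^k * (k.factorial * Real.exp ((1 - Real.log u)/2)) := by
          rw [div_le_iff₀ hfac] at h1
          have h2k : (0:ℝ) ≤ 2^k := by positivity
          nlinarith
      _ = 2^k * k.factorial * Real.exp (1/2) * u ^ (-(1/2) : ℝ) := by rw [h2]; ring

lemma int_T (j k : ℕ) (c : ℝ) (hc0 : 0 ≤ c) (hc1 : c ≤ 1) :
    IntegrableOn (fun u : ℝ => u^(j-1) * (c - Real.log u)^k) (Ioc (0:ℝ) 1) := by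
  refine Integrable.mono' (int_log_pow k) ?_ ?_
  · exact ((measurable_id.pow_const _).mul
      ((measurable_const.sub Real.measurable_log).pow_const k)).aestronglyMeasurable
  · filter_upwards [ae_restrict_mem measurableSet_Ioc] with u hu
    have hu0 : (0:ℝ) < u := hu.1
    have hlog : Real.log u ≤ 0 := Real.log_nonpos hu0.le hu.2
    have h1 : (0:ℝ) ≤ c - Real.log u := by linarith
    rw [Real.norm_eq_abs, abs_of_nonneg (mul_nonneg (pow_nonneg hu0.le _) (pow_nonneg h1 _))]
    have h2 : u^(j-1) ≤ 1 := pow_le_one₀ hu0.le hu.2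
    have h3 : (c - Real.log u)^k ≤ (1 - Real.log u)^k :=
      pow_le_pow_left₀ h1 (by linarith) k
    have h4 : (0:ℝ) ≤ (1 - Real.log u)^k := pow_nonneg (by linarith) k
    nlinarith [pow_nonneg hu0.le (j-1), pow_nonneg h1 k]

lemma tendsto_pow_log (j k : ℕ) (hj : 1 ≤ j) (c : ℝ) :
    Filter.Tendsto (fun u : ℝ => u^j * (c - Real.log u)^k)
      (nhdsWithin 0 (Ioi 0)) (nhds 0) := by
  rcases Nat.eq_zero_or_pos k with hk | hk
  · subst hk
    simp only [pow_zero, mul_one]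
    have : Filter.Tendsto (fun u : ℝ => u^j) (nhds 0) (nhds 0) := by
      have := (continuous_pow j (M := ℝ)).tendsto 0
      simpa [zero_pow (by omega : j ≠ 0)] using this
    exact this.mono_left nhdsWithin_le_nhds
  · have hk0 : (k:ℝ) ≠ 0 := Nat.cast_ne_zero.2 (by omega)
    have hr : (0:ℝ) < (j:ℝ)/k := by positivity
    have h1 : Filter.Tendsto (fun u : ℝ => u ^ ((j:ℝ)/k)) (nhdsWithin 0 (Ioi 0)) (nhds 0) := by
      have hc : ContinuousAt (fun x : ℝ => x ^ ((j:ℝ)/k)) 0 :=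
        Real.continuousAt_rpow_const 0 _ (Or.inr hr.le)
      have := hc.tendsto.mono_left (nhdsWithin_le_nhds (s := Ioi (0:ℝ)))
      simpa [Real.zero_rpow hr.ne'] using this
    have h2 : Filter.Tendsto (fun u : ℝ => Real.log u * u ^ ((j:ℝ)/k))
        (nhdsWithin 0 (Ioi 0)) (nhds 0) := tendsto_log_mul_rpow_nhdsGT_zero hr
    have h3 : Filter.Tendsto (fun u : ℝ => u ^ ((j:ℝ)/k) * (c - Real.log u))
        (nhdsWithin 0 (Ioi 0)) (nhds 0) := by
      have := (h1.const_mul c).sub h2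
      simp only [mul_zero, sub_zero, mul_comm] at this ⊢
      convert this using 2 with u
      ring
    have h4 := h3.pow k
    rw [zero_pow (by omega : k ≠ 0)] at h4
    refine h4.congr' ?_
    filter_upwards [self_mem_nhdsWithin] with u hu
    have hu0 : (0:ℝ) < u := hu
    rw [mul_pow, ← Real.rpow_natCast (u ^ ((j:ℝ)/k)) k, ← Real.rpow_mul hu0.le,
      div_mul_cancel₀ _ hk0, Real.rpow_natCast]

lemma T_ident (j : ℕ) (hj : 1 ≤ j) (c : ℝ) (hc0 : 0 ≤ c) (hc1 : c ≤ 1) (k : ℕ)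
    {z : ℝ} (hz0 : 0 < z) (hz1 : z ≤ 1) :
    (j:ℝ) * ∫ u in Ioc (0:ℝ) z, u^(j-1) * (c - Real.log u)^k
      = z^j * (c - Real.log z)^k
        + k * ∫ u in Ioc (0:ℝ) z, u^(j-1) * (c - Real.log u)^(k-1) := by
  have hint1 : IntegrableOn (fun u : ℝ => u^(j-1) * (c - Real.log u)^k) (Ioc (0:ℝ) z) :=
    (int_T j k c hc0 hc1).mono_set (Ioc_subset_Ioc_right hz1)
  have hint2 : IntegrableOn (fun u : ℝ => u^(j-1) * (c - Real.log u)^(k-1)) (Ioc (0:ℝ) z) :=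
    (int_T j (k-1) c hc0 hc1).mono_set (Ioc_subset_Ioc_right hz1)
  have key : ∫ u in (0:ℝ)..z,
      ((j:ℝ) * (u^(j-1) * (c - Real.log u)^k) - k * (u^(j-1) * (c - Real.log u)^(k-1)))
      = z^j * (c - Real.log z)^k - 0 := by
    refine intervalIntegral.integral_eq_sub_of_hasDerivAt_of_tendsto hz0
      (f := fun u => u^j * (c - Real.log u)^k) (fun u hu => ?_) ?_ ?_ ?_
    · have hu0 : (0:ℝ) < u := hu.1
      have hd1 : HasDerivAt (fun u : ℝ => u^j) ((j:ℝ) * u^(j-1)) u := hasDerivAt_pow j u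
      have hd2 : HasDerivAt (fun u : ℝ => (c - Real.log u)^k)
          ((k:ℝ) * (c - Real.log u)^(k-1) * (0 - u⁻¹)) u :=
        ((hasDerivAt_const u c).sub (Real.hasDerivAt_log hu0.ne')).pow k
      have := hd1.mul hd2
      refine this.congr_deriv ?_
      have hj' : u^j = u^(j-1) * u := by
        conv_lhs => rw [show j = (j-1)+1 by omega]
        rw [pow_succ]
      rw [hj']
      field_simp
      ring
    · refine IntervalIntegrable.sub ?_ ?_
      · rw [intervalIntegrable_iff_integrableOn_Ioc_of_le hz0.le]
        exact hint1.const_mul _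
      · rw [intervalIntegrable_iff_integrableOn_Ioc_of_le hz0.le]
        exact hint2.const_mul _
    · exact tendsto_pow_log j k hj c
    · have : ContinuousAt (fun u : ℝ => u^j * (c - Real.log u)^k) z := by
        exact (continuousAt_pow z j).mul
          (((continuousAt_const.sub (Real.continuousAt_log hz0.ne'))).pow k)
      exact this.tendsto.mono_left nhdsWithin_le_nhds
  rw [intervalIntegral.integral_of_le hz0.le] at key
  rw [integral_sub (hint1.const_mul _) (hint2.const_mul _),
    integral_const_mul, integral_const_mul] at key
  linarith [key]

lemma T_bound (j : ℕ) (hj : 1 ≤ j) (c : ℝ) (hc0 : 0 ≤ c) (hc1 : c ≤ 1) (k : ℕ) :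
    ∃ C : ℝ, 0 ≤ C ∧ ∀ z : ℝ, 0 < z → z ≤ 1 →
      (0 ≤ ∫ u in Ioc (0:ℝ) z, u^(j-1) * (c - Real.log u)^k) ∧
      (∫ u in Ioc (0:ℝ) z, u^(j-1) * (c - Real.log u)^k) ≤ C * (z^j * (1 - Real.log z)^k) := by
  induction k with
  | zero =>
    refine ⟨1, zero_le_one, fun z hz0 hz1 => ?_⟩
    have hnn : 0 ≤ ∫ u in Ioc (0:ℝ) z, u^(j-1) * (c - Real.log u)^0 := by
      refine setIntegral_nonneg measurableSet_Ioc (fun u hu => ?_)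
      exact mul_nonneg (pow_nonneg hu.1.le _) (pow_nonneg (by
        have := Real.log_nonpos hu.1.le (hu.2.trans hz1); linarith) _)
    refine ⟨hnn, ?_⟩
    have := T_ident j hj c hc0 hc1 0 hz0 hz1
    simp only [pow_zero, mul_one, Nat.cast_zero, zero_mul, add_zero] at this
    have hz : (0:ℝ) < z^j := pow_pos hz0 j
    have hj1 : (1:ℝ) ≤ (j:ℝ) := by exact_mod_cast hj
    simp only [pow_zero, mul_one]
    nlinarith
  | succ k ih =>
    obtain ⟨C, hC, hCb⟩ := ih
    refine ⟨1 + (k+1) * C, by positivity, fun z hz0 hz1 => ?_⟩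
    have hlogz : Real.log z ≤ 0 := Real.log_nonpos hz0.le hz1
    have hnn : 0 ≤ ∫ u in Ioc (0:ℝ) z, u^(j-1) * (c - Real.log u)^(k+1) := by
      refine setIntegral_nonneg measurableSet_Ioc (fun u hu => ?_)
      exact mul_nonneg (pow_nonneg hu.1.le _) (pow_nonneg (by
        have := Real.log_nonpos hu.1.le (hu.2.trans hz1); linarith) _)
    refine ⟨hnn, ?_⟩
    have hid := T_ident j hj c hc0 hc1 (k+1) hz0 hz1
    simp only [Nat.add_sub_cancel] at hid
    obtain ⟨h1, h2⟩ := hCb z hz0 hz1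
    have hz : (0:ℝ) < z^j := pow_pos hz0 j
    have hj1 : (1:ℝ) ≤ (j:ℝ) := by exact_mod_cast hj
    have hbase : (0:ℝ) ≤ 1 - Real.log z := by linarith
    have hb1 : (1:ℝ) ≤ 1 - Real.log z := by linarith
    have hp1 : (c - Real.log z)^(k+1) ≤ (1 - Real.log z)^(k+1) :=
      pow_le_pow_left₀ (by linarith) (by linarith) _
    have hp2 : (1 - Real.log z)^k ≤ (1 - Real.log z)^(k+1) :=
      pow_le_pow_right₀ hb1 (by omega)
    have hkc : (0:ℝ) ≤ (k:ℝ)+1 := by positivity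
    push_cast at hid
    set I := ∫ (u : ℝ) in Ioc 0 z, u ^ (j - 1) * (c - Real.log u) ^ (k + 1) with hI
    set Ik := ∫ (u : ℝ) in Ioc 0 z, u ^ (j - 1) * (c - Real.log u) ^ k with hIk
    have e1 : (j:ℝ) * I ≤ (1 + ((k:ℝ)+1) * C) * (z ^ j * (1 - Real.log z) ^ (k + 1)) := by
      rw [hid]
      have t1 : z ^ j * (c - Real.log z) ^ (k+1) ≤ z ^ j * (1 - Real.log z) ^ (k+1) :=
        mul_le_mul_of_nonneg_left hp1 hz.le
      have t2 : ((k:ℝ)+1) * Ik ≤ ((k:ℝ)+1) * (C * (z ^ j * (1 - Real.log z) ^ k)) :=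
        mul_le_mul_of_nonneg_left h2 hkc
      have t3 : ((k:ℝ)+1) * (C * (z ^ j * (1 - Real.log z) ^ k))
          ≤ ((k:ℝ)+1) * (C * (z ^ j * (1 - Real.log z) ^ (k+1)))  := by
        have := mul_le_mul_of_nonneg_left hp2 hz.le
        have h0 : (0:ℝ) ≤ ((k:ℝ)+1) * C := mul_nonneg hkc hC
        nlinarith
      nlinarith
    have e2 : I ≤ (j:ℝ) * I := by nlinarith
    linarith

/-- key elementary inequality -/
lemma log_diff_le {x t : ℝ} (hx0 : 0 < x) (hx1 : x ≤ 1) (ht : 0 < t) :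
    Real.log t - Real.log x ≤ (1 - Real.log x) * (1 + t) := by
  have h1 : Real.log t ≤ t - 1 := Real.log_le_sub_one_of_pos ht
  have h2 : Real.log x ≤ 0 := Real.log_nonpos hx0.le hx1
  nlinarith

set_option maxHeartbeats 1000000 in
/-- The main step lemma. -/
lemma mg_step (m : ℕ) (ε : ℝ → ℝ) (hεm : Measurable ε) (D : ℝ)
    (hε : ∀ y : ℝ, 0 < y → y ≤ 1 →
      |meijerG00 m y - (-Real.log y)^m / (Nat.factorial m)| ≤ ε y)
    (hεint : ∀ x : ℝ, 0 < x → x ≤ 1 →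
      IntegrableOn (fun t => ε (x/t) * Real.exp (-t) / t) (Ioi x))
    (hεbd : ∀ x : ℝ, 0 < x → x ≤ 1 →
      (∫ t in Ioi x, ε (x/t) * Real.exp (-t) / t) ≤ D * (1 - Real.log x)^m) :
    ∃ C : ℝ, 0 ≤ C ∧ ∀ x : ℝ, 0 < x → x ≤ 1 →
      |meijerG00 (m+1) x - (-Real.log x)^(m+1) / (Nat.factorial (m+1))|
        ≤ C * (1 - Real.log x)^m := by
  set K : ℝ := ∫ t in Ioi (1:ℝ), (1+t)^m * Real.exp (-t) with hK
  have hKnn : 0 ≤ K := setIntegral_nonneg measurableSet_Ioi (fun t ht => by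
    have ht1 : (1:ℝ) < t := ht
    positivity)
  clear_value K
  have hDnn : 0 ≤ D := by
    have h1 := hεbd 1 one_pos le_rfl
    have h2 : 0 ≤ ∫ t in Ioi (1:ℝ), ε (1/t) * Real.exp (-t) / t := by
      refine setIntegral_nonneg measurableSet_Ioi (fun t ht => ?_)
      have ht0 : (0:ℝ) < t := lt_trans one_pos ht
      have hεnn : 0 ≤ ε (1/t) := by
        refine le_trans (abs_nonneg _) (hε (1/t) (by positivity) ?_)
        rw [div_le_one ht0]; exact le_of_lt ht
      positivity
    simpa [Real.log_one] using le_trans h2 h1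
  refine ⟨2 + K + D, by positivity, fun x hx0 hx1 => ?_⟩
  have hlogx : Real.log x ≤ 0 := Real.log_nonpos hx0.le hx1
  have hb1 : (1:ℝ) ≤ 1 - Real.log x := by linarith
  have hbm : (1:ℝ) ≤ (1 - Real.log x)^m := one_le_pow₀ hb1
  set g : ℝ → ℝ := fun t => meijerG00 m (x/t) * Real.exp (-t) / t with hg
  set φ : ℝ → ℝ := fun t => (Real.log t - Real.log x)^m with hφ
  set h : ℝ → ℝ := fun t => φ t * Real.exp (-t) / t with hh
  -- integrabilities
  have hgint : IntegrableOn g (Ioi (0:ℝ)) := mg_kernel_int m hx0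
  have hgint1 : IntegrableOn g (Ioc 0 x) := hgint.mono_set Ioc_subset_Ioi_self
  have hgint2 : IntegrableOn g (Ioi x) := hgint.mono_set (Ioi_subset_Ioi hx0.le)
  have hφnn : ∀ t : ℝ, x < t → 0 ≤ φ t := by
    intro t ht
    have : Real.log x ≤ Real.log t := Real.log_le_log hx0 ht.le
    exact pow_nonneg (by linarith) m
  have hφle : ∀ t : ℝ, x < t → φ t ≤ (1 - Real.log x)^m * (1+t)^m := by
    intro t ht
    have ht0 : 0 < t := lt_trans hx0 ht
    have h1 : Real.log x ≤ Real.log t := Real.log_le_log hx0 ht.le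
    rw [← mul_pow]
    exact pow_le_pow_left₀ (by linarith) (log_diff_le hx0 hx1 ht0) m
  have hmeasφ : Measurable h := by
    refine ((Real.measurable_log.sub measurable_const).pow_const m |>.mul
      ((Real.continuous_exp.comp continuous_neg).measurable)).div measurable_id
  have hhint : IntegrableOn h (Ioi x) := by
    refine Integrable.mono' (((int_B m).mono_set (Ioi_subset_Ioi hx0.le)).const_mul
      ((1 - Real.log x)^m / x)) hmeasφ.aestronglyMeasurable ?_
    filter_upwards [ae_restrict_mem measurableSet_Ioi] with t ht
    have ht0 : 0 < t := lt_trans hx0 ht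
    rw [Real.norm_eq_abs, abs_of_nonneg (div_nonneg (mul_nonneg (hφnn t ht)
      (Real.exp_pos _).le) ht0.le)]
    have hx_inv : 1 / t ≤ 1 / x := by
      apply one_div_le_one_div_of_le hx0 ht.le
    have hxt : x < t := ht
    calc φ t * Real.exp (-t) / t ≤ ((1 - Real.log x)^m * (1+t)^m) * Real.exp (-t) / x := by
          rw [div_le_div_iff₀ ht0 hx0]
          have hRnn : 0 ≤ ((1 - Real.log x)^m * (1+t)^m) * Real.exp (-t) :=
            mul_nonneg (mul_nonneg (pow_nonneg (by linarith) m)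
              (pow_nonneg (by linarith) m)) (Real.exp_pos _).le
          have e1 : φ t * Real.exp (-t) ≤ ((1 - Real.log x)^m * (1+t)^m) * Real.exp (-t) :=
            mul_le_mul_of_nonneg_right (hφle t hxt) (Real.exp_pos _).le
          calc φ t * Real.exp (-t) * x
              ≤ ((1 - Real.log x)^m * (1+t)^m) * Real.exp (-t) * x :=
                mul_le_mul_of_nonneg_right e1 hx0.le
            _ ≤ ((1 - Real.log x)^m * (1+t)^m) * Real.exp (-t) * t :=
                mul_le_mul_of_nonneg_left hxt.le hRnn
      _ = (1 - Real.log x)^m / x * ((1+t)^m * Real.exp (-t)) := by ring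
  -- decomposition of the full integral
  have hsplit : meijerG00 (m+1) x = (∫ t in Ioc 0 x, g t) + ∫ t in Ioi x, g t := by
    show (∫ t in Ioi (0:ℝ), g t) = _
    rw [← setIntegral_union (Ioc_disjoint_Ioi le_rfl) measurableSet_Ioi hgint1 hgint2,
      Ioc_union_Ioi_eq_Ioi hx0.le]
  -- part 1 : the near piece
  have hI1 : |∫ t in Ioc 0 x, g t| ≤ 1 := by
    have hb : ∀ t ∈ Ioc (0:ℝ) x, ‖g t‖ ≤ 1/x := by
      intro t ht
      have ht0 : 0 < t := ht.1
      rw [Real.norm_eq_abs, abs_of_nonneg (div_nonneg (mul_nonneg (mg_nonneg m _)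
        (Real.exp_pos _).le) ht0.le)]
      have h1 : meijerG00 m (x / t) ≤ t / x := by
        have := mg_le m (x / t) (by positivity)
        rwa [one_div_div] at this
      calc meijerG00 m (x / t) * Real.exp (-t) / t ≤ (t/x) * Real.exp (-t) / t := by
            have := Real.exp_pos (-t); gcongr
        _ = Real.exp (-t) / x := by field_simp
        _ ≤ 1 / x := by
            have : Real.exp (-t) ≤ 1 := Real.exp_le_one_iff.2 (by linarith)
            gcongr
    have := norm_setIntegral_le_of_norm_le_const (μ := volume) (s := Ioc (0:ℝ) x)
      (by rw [Real.volume_Ioc]; exact ENNReal.ofReal_lt_top) hb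
    rw [Real.volume_real_Ioc_of_le (by linarith)] at this
    calc |∫ t in Ioc 0 x, g t| ≤ 1/x * (x - 0) := this
      _ = 1 := by field_simp; ring
  -- error piece on (x, ∞)
  have hE : |(∫ t in Ioi x, g t) - ∫ t in Ioi x, h t / (Nat.factorial m)|
      ≤ D * (1 - Real.log x)^m := by
    have hhint' : IntegrableOn (fun t => h t / (Nat.factorial m)) (Ioi x) :=
      hhint.div_const _
    rw [← integral_sub hgint2 hhint']
    have hnorm : |∫ t in Ioi x, (g t - h t / (Nat.factorial m))|
        ≤ ∫ t in Ioi x, |g t - h t / (Nat.factorial m)| := by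
      simpa [Real.norm_eq_abs] using
        norm_integral_le_integral_norm (μ := volume.restrict (Ioi x))
          (f := fun t => g t - h t / (Nat.factorial m))
    refine le_trans hnorm (le_trans ?_ (hεbd x hx0 hx1))
    refine integral_mono_of_nonneg (Eventually.of_forall (fun t => abs_nonneg _))
      (hεint x hx0 hx1) ?_
    filter_upwards [ae_restrict_mem measurableSet_Ioi] with t ht
    have ht0 : 0 < t := lt_trans hx0 ht
    have hxt0 : 0 < x / t := by positivity
    have hxt1 : x / t ≤ 1 := by rw [div_le_one ht0]; exact ht.le
    have key : g t - h t / (Nat.factorial m)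
        = (meijerG00 m (x/t) - (-Real.log (x/t))^m / (Nat.factorial m)) * (Real.exp (-t) / t) := by
      have hlog : -Real.log (x/t) = Real.log t - Real.log x := by
        rw [Real.log_div hx0.ne' ht0.ne']; ring
      rw [hlog]
      simp only [hg, hh, hφ]
      field_simp
    rw [key, abs_mul, abs_of_nonneg (by positivity : (0:ℝ) ≤ Real.exp (-t) / t)]
    have h1 := hε (x/t) hxt0 hxt1
    have h2 : 0 ≤ Real.exp (-t) / t := by positivity
    calc |meijerG00 m (x/t) - (-Real.log (x/t))^m / (Nat.factorial m)| * (Real.exp (-t) / t)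
        ≤ ε (x/t) * (Real.exp (-t) / t) := mul_le_mul_of_nonneg_right h1 h2
      _ = ε (x/t) * Real.exp (-t) / t := by ring
  -- main piece N
  have hhint1 : IntegrableOn h (Ioc x 1) := hhint.mono_set Ioc_subset_Ioi_self
  have hhint2 : IntegrableOn h (Ioi 1) := hhint.mono_set (Ioi_subset_Ioi hx1)
  have hNsplit : (∫ t in Ioi x, h t) = (∫ t in Ioc x 1, h t) + ∫ t in Ioi (1:ℝ), h t := by
    rw [← setIntegral_union (Ioc_disjoint_Ioi le_rfl) measurableSet_Ioi hhint1 hhint2,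
      Ioc_union_Ioi_eq_Ioi hx1]
  -- N1 + N1'
  have hcont1 : ContinuousOn (fun t : ℝ => φ t / t) (Icc x 1) := by
    refine ContinuousOn.div ?_ continuousOn_id ?_
    · exact ((Real.continuousOn_log.mono (fun t ht => ne_of_gt (lt_of_lt_of_le hx0 ht.1))).sub
        continuousOn_const).pow m
    · exact fun t ht => ne_of_gt (lt_of_lt_of_le hx0 ht.1)
  have hcont2 : ContinuousOn (fun t : ℝ => φ t * (Real.exp (-t) - 1) / t) (Icc x 1) := by
    refine ContinuousOn.div (ContinuousOn.mul ?_ ?_) continuousOn_id ?_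
    · exact ((Real.continuousOn_log.mono (fun t ht => ne_of_gt (lt_of_lt_of_le hx0 ht.1))).sub
        continuousOn_const).pow m
    · exact ((Real.continuous_exp.comp continuous_neg).sub continuous_const).continuousOn
    · exact fun t ht => ne_of_gt (lt_of_lt_of_le hx0 ht.1)
  have hint1' : IntegrableOn (fun t : ℝ => φ t / t) (Ioc x 1) :=
    (hcont1.integrableOn_Icc).mono_set Ioc_subset_Icc_self
  have hint2' : IntegrableOn (fun t : ℝ => φ t * (Real.exp (-t) - 1) / t) (Ioc x 1) :=
    (hcont2.integrableOn_Icc).mono_set Ioc_subset_Icc_self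
  have hN1split : (∫ t in Ioc x 1, h t)
      = (∫ t in Ioc x 1, φ t / t) + ∫ t in Ioc x 1, φ t * (Real.exp (-t) - 1) / t := by
    rw [← integral_add hint1' hint2']
    refine setIntegral_congr_fun measurableSet_Ioc (fun t ht => ?_)
    have ht0 : 0 < t := lt_of_le_of_lt hx0.le ht.1
    simp only [hh]
    field_simp
    ring
  have hN1 : (∫ t in Ioc x 1, φ t / t) = (-Real.log x)^(m+1) / (m+1) := by
    have hFTC : ∫ t in x..1, (Real.log t - Real.log x)^m / t
        = (Real.log 1 - Real.log x)^(m+1) / (m+1) - (Real.log x - Real.log x)^(m+1) / (m+1) := by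
      refine intervalIntegral.integral_eq_sub_of_hasDerivAt
        (f := fun t => (Real.log t - Real.log x)^(m+1) / (m+1)) (fun t ht => ?_) ?_
      · rw [uIcc_of_le hx1] at ht
        have ht0 : 0 < t := lt_of_lt_of_le hx0 ht.1
        have hd : HasDerivAt (fun t : ℝ => (Real.log t - Real.log x)^(m+1))
            (((m:ℝ)+1) * (Real.log t - Real.log x)^m * t⁻¹) t := by
          have := ((Real.hasDerivAt_log ht0.ne').sub_const (Real.log x)).pow (m+1)
          simp [Nat.add_sub_cancel] at this
          exact this
        have := hd.div_const ((m:ℝ)+1)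
        refine this.congr_deriv ?_
        beta_reduce
        have hm1 : ((m:ℝ)+1) ≠ 0 := by positivity
        rw [mul_assoc, mul_div_cancel_left₀ _ hm1, div_eq_mul_inv]
      · refine ContinuousOn.intervalIntegrable ?_
        rw [uIcc_of_le hx1]
        exact hcont1
    rw [intervalIntegral.integral_of_le hx1] at hFTC
    rw [hFTC, Real.log_one, sub_self, zero_pow (by omega : m+1 ≠ 0)]
    ring_nf
  have hN1' : |∫ t in Ioc x 1, φ t * (Real.exp (-t) - 1) / t| ≤ (1 - Real.log x)^m := by
    have hb : ∀ t ∈ Ioc x 1, ‖φ t * (Real.exp (-t) - 1) / t‖ ≤ (-Real.log x)^m := by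
      intro t ht
      have ht0 : 0 < t := lt_trans hx0 ht.1
      have hlt : Real.log t ≤ 0 := Real.log_nonpos ht0.le ht.2
      have hlx : Real.log x ≤ Real.log t := Real.log_le_log hx0 ht.1.le
      have hexp1 : Real.exp (-t) ≤ 1 := Real.exp_le_one_iff.2 (by linarith)
      have hexp2 : 1 - t ≤ Real.exp (-t) := by nlinarith [Real.add_one_le_exp (-t)]
      have he : |Real.exp (-t) - 1| ≤ t := by
        rw [abs_sub_comm, abs_of_nonneg (by linarith)]
        linarith
      have hφb : φ t ≤ (-Real.log x)^m := pow_le_pow_left₀ (by linarith) (by linarith) m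
      have hnorm : ‖φ t * (Real.exp (-t) - 1) / t‖ = φ t * |Real.exp (-t) - 1| / t := by
        rw [Real.norm_eq_abs, abs_div, abs_mul, abs_of_pos ht0, abs_of_nonneg (hφnn t ht.1)]
      rw [hnorm, div_le_iff₀ ht0]
      exact mul_le_mul hφb he (abs_nonneg _) (pow_nonneg (by linarith) m)
    have hvol : volume (Ioc x 1) < ⊤ := by
      rw [Real.volume_Ioc]; exact ENNReal.ofReal_lt_top
    have hbnd := norm_setIntegral_le_of_norm_le_const hvol hb
    rw [Real.volume_real_Ioc_of_le (by linarith)] at hbnd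
    have hpow : (-Real.log x)^m ≤ (1 - Real.log x)^m :=
      pow_le_pow_left₀ (by linarith) (by linarith) m
    have hnn : (0:ℝ) ≤ (-Real.log x)^m := pow_nonneg (by linarith) m
    calc |∫ t in Ioc x 1, φ t * (Real.exp (-t) - 1) / t|
        ≤ (-Real.log x)^m * (1 - x) := hbnd
      _ ≤ (1 - Real.log x)^m := by nlinarith
  have hN2nn : 0 ≤ ∫ t in Ioi (1:ℝ), h t := by
    refine setIntegral_nonneg measurableSet_Ioi (fun t ht => ?_)
    have ht1 : (1:ℝ) < t := ht
    have ht0 : 0 < t := lt_trans one_pos ht1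
    exact div_nonneg (mul_nonneg (hφnn t (lt_of_le_of_lt hx1 ht1)) (Real.exp_pos _).le) ht0.le
  have hN2 : (∫ t in Ioi (1:ℝ), h t) ≤ (1 - Real.log x)^m * K := by
    have hmono := setIntegral_mono_on hhint2
      (((int_B m).mono_set (Ioi_subset_Ioi zero_le_one)).const_mul ((1 - Real.log x)^m))
      measurableSet_Ioi (fun t ht => ?_)
    · rw [integral_const_mul] at hmono
      rw [hK]
      exact hmono
    · have ht1 : (1:ℝ) < t := ht
      have ht0 : 0 < t := lt_trans one_pos ht1
      have hxt : x < t := lt_of_le_of_lt hx1 ht1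
      calc h t = φ t * Real.exp (-t) / t := rfl
        _ ≤ φ t * Real.exp (-t) / 1 := by
            apply div_le_div_of_nonneg_left (mul_nonneg (hφnn t hxt) (Real.exp_pos _).le)
              one_pos ht1.le
        _ = φ t * Real.exp (-t) := by rw [div_one]
        _ ≤ ((1 - Real.log x)^m * (1+t)^m) * Real.exp (-t) :=
            mul_le_mul_of_nonneg_right (hφle t hxt) (Real.exp_pos _).le
        _ = (1 - Real.log x)^m * ((1+t)^m * Real.exp (-t)) := by ring
  -- assembly
  have hmf0 : (0:ℝ) < (Nat.factorial m : ℝ) := by positivity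
  have hmf1 : (1:ℝ) ≤ (Nat.factorial m : ℝ) := by
    exact_mod_cast Nat.one_le_iff_ne_zero.2 (Nat.factorial_ne_zero m)
  have hfact : ((Nat.factorial (m+1) : ℝ)) = ((m:ℝ)+1) * (Nat.factorial m) := by
    rw [Nat.factorial_succ]; push_cast; ring
  have hIoixh : (∫ t in Ioi x, h t / (Nat.factorial m : ℝ))
      = (∫ t in Ioi x, h t) / (Nat.factorial m : ℝ) := integral_div _ _
  have em : meijerG00 (m+1) x - (-Real.log x)^(m+1) / (Nat.factorial (m+1))
      = (∫ t in Ioc 0 x, g t)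
        + ((∫ t in Ioi x, g t) - ∫ t in Ioi x, h t / (Nat.factorial m : ℝ))
        + ((∫ t in Ioc x 1, φ t * (Real.exp (-t) - 1) / t)
            + ∫ t in Ioi (1:ℝ), h t) / (Nat.factorial m : ℝ) := by
    rw [hsplit, hIoixh, hNsplit, hN1split, hN1, hfact]
    have hm1 : ((m:ℝ)+1) ≠ 0 := by positivity
    field_simp
    ring
  rw [em]
  set B := (1 - Real.log x)^m with hB
  clear_value B
  have step1 : |(∫ t in Ioc 0 x, g t)
        + ((∫ t in Ioi x, g t) - ∫ t in Ioi x, h t / (Nat.factorial m : ℝ))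
        + ((∫ t in Ioc x 1, φ t * (Real.exp (-t) - 1) / t)
            + ∫ t in Ioi (1:ℝ), h t) / (Nat.factorial m : ℝ)|
      ≤ 1 + D * B + (B + B * K) / (Nat.factorial m : ℝ) := by
    refine le_trans (abs_add_le _ _) ?_
    have t1 := le_trans (abs_add_le (∫ t in Ioc 0 x, g t)
      ((∫ t in Ioi x, g t) - ∫ t in Ioi x, h t / (Nat.factorial m : ℝ)))
      (add_le_add hI1 hE)
    have t2 : |((∫ t in Ioc x 1, φ t * (Real.exp (-t) - 1) / t)
            + ∫ t in Ioi (1:ℝ), h t) / (Nat.factorial m : ℝ)|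
        ≤ (B + B * K) / (Nat.factorial m : ℝ) := by
      rw [abs_div, abs_of_pos hmf0]
      have habs : |(∫ t in Ioc x 1, φ t * (Real.exp (-t) - 1) / t)
            + ∫ t in Ioi (1:ℝ), h t| ≤ B + B * K := by
        refine le_trans (abs_add_le _ _) ?_
        rw [abs_of_nonneg hN2nn]
        exact add_le_add hN1' hN2
      gcongr
    linarith
  refine le_trans step1 ?_
  have hBnn : (0:ℝ) ≤ B := le_trans zero_le_one hbm
  have hq : (B + B * K) / (Nat.factorial m : ℝ) ≤ B + B * K := by
    rw [div_le_iff₀ hmf0]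
    nlinarith [mul_nonneg hBnn hKnn]
  nlinarith [mul_nonneg hDnn hBnn, mul_nonneg hBnn hKnn]

lemma rpow_neg_two_int {x : ℝ} (hx : 0 < x) :
    IntegrableOn (fun t : ℝ => t ^ (-2:ℝ)) (Ioi x) :=
  integrableOn_Ioi_rpow_of_lt (by norm_num) hx

lemma integral_rpow_neg_two {x : ℝ} (hx : 0 < x) :
    (∫ t in Ioi x, t ^ (-2:ℝ)) = x⁻¹ := by
  rw [integral_Ioi_rpow_of_lt (by norm_num) hx]
  norm_num
  rw [Real.rpow_neg_one]

lemma mg_log_bound : ∀ m : ℕ, 1 ≤ m →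
    ∃ C : ℝ, 0 ≤ C ∧ ∀ x : ℝ, 0 < x → x ≤ 1 →
      |meijerG00 m x - (-Real.log x)^m / (Nat.factorial m)| ≤ C * (1 - Real.log x)^(m-1) := by
  intro m hm
  induction m, hm using Nat.le_induction with
  | base =>
    have hε : ∀ y : ℝ, 0 < y → y ≤ 1 →
        |meijerG00 0 y - (-Real.log y)^0 / (Nat.factorial 0)| ≤ y := by
      intro y hy0 hy1
      show |Real.exp (-y) - (-Real.log y)^0 / (Nat.factorial 0)| ≤ y
      have he1 : Real.exp (-y) ≤ 1 := Real.exp_le_one_iff.2 (by linarith)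
      have he2 : 1 - y ≤ Real.exp (-y) := by nlinarith [Real.add_one_le_exp (-y)]
      simp only [pow_zero, Nat.factorial_zero, Nat.cast_one, div_one]
      rw [abs_sub_comm, abs_of_nonneg (by linarith)]
      linarith
    have hptwise : ∀ x t : ℝ, 0 < x → x < t → x / t * Real.exp (-t) / t ≤ x * t ^ (-2:ℝ) := by
      intro x t hx0 ht
      have ht0 : 0 < t := lt_trans hx0 ht
      have hrw : x * t ^ (-2:ℝ) = x / (t*t) := by
        rw [show (-2:ℝ) = -((2:ℕ):ℝ) by norm_num, Real.rpow_neg ht0.le,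
          Real.rpow_natCast, pow_two, ← div_eq_mul_inv]
      have he : Real.exp (-t) ≤ 1 := Real.exp_le_one_iff.2 (by linarith)
      rw [hrw, div_le_div_iff₀ ht0 (by positivity : (0:ℝ) < t*t)]
      have hkey : x / t * Real.exp (-t) * (t*t) = x * t * Real.exp (-t) := by
        rw [div_mul_eq_mul_div, div_mul_eq_mul_div, div_eq_iff ht0.ne']
        ring
      rw [hkey]
      nlinarith [mul_pos hx0 ht0]
    have hint : ∀ x : ℝ, 0 < x → x ≤ 1 →
        IntegrableOn (fun t => x/t * Real.exp (-t) / t) (Ioi x) := by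
      intro x hx0 hx1
      refine Integrable.mono' ((rpow_neg_two_int hx0).const_mul x) ?_ ?_
      · exact ((measurable_const.div measurable_id).mul
          (Real.continuous_exp.comp continuous_neg).measurable).div measurable_id
          |>.aestronglyMeasurable
      · filter_upwards [ae_restrict_mem measurableSet_Ioi] with t ht
        have ht0 : 0 < t := lt_trans hx0 ht
        rw [Real.norm_eq_abs, abs_of_nonneg (by positivity)]
        exact hptwise x t hx0 ht
    have hbd : ∀ x : ℝ, 0 < x → x ≤ 1 →
        (∫ t in Ioi x, x/t * Real.exp (-t) / t) ≤ 1 * (1 - Real.log x)^0 := by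
      intro x hx0 hx1
      rw [pow_zero, mul_one]
      have hle : (∫ t in Ioi x, x/t * Real.exp (-t) / t) ≤ ∫ t in Ioi x, x * t ^ (-2:ℝ) := by
        refine integral_mono_of_nonneg ?_ ((rpow_neg_two_int hx0).const_mul x) ?_
        · filter_upwards [ae_restrict_mem measurableSet_Ioi] with t ht
          have ht0 : 0 < t := lt_trans hx0 ht
          positivity
        · filter_upwards [ae_restrict_mem measurableSet_Ioi] with t ht
          exact hptwise x t hx0 ht
      rw [integral_const_mul, integral_rpow_neg_two hx0, mul_inv_cancel₀ hx0.ne'] at hle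
      exact hle
    have h := mg_step 0 (fun y => y) measurable_id 1 hε hint hbd
    simpa using h
  | succ n hn ih =>
    obtain ⟨C, hC, hCb⟩ := ih
    set K' : ℝ := ∫ t in Ioi (1:ℝ), (1+t)^(n-1) * Real.exp (-t) with hK'
    have hK'nn : 0 ≤ K' := setIntegral_nonneg measurableSet_Ioi (fun t ht => by
      have ht1 : (1:ℝ) < t := ht
      positivity)
    clear_value K'
    have key : ∀ x t : ℝ, 0 < x → x ≤ 1 → x < t →
        0 ≤ 1 - Real.log (x/t) ∧ 1 - Real.log (x/t) ≤ (1 - Real.log x) * (1+t) := by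
      intro x t hx0 hx1 hxt
      have ht0 : 0 < t := lt_trans hx0 hxt
      have hlog : Real.log (x/t) = Real.log x - Real.log t := Real.log_div hx0.ne' ht0.ne'
      have h1 : Real.log x ≤ Real.log t := Real.log_le_log hx0 hxt.le
      have h2 : Real.log t ≤ t - 1 := Real.log_le_sub_one_of_pos ht0
      have h3 : Real.log x ≤ 0 := Real.log_nonpos hx0.le hx1
      constructor
      · rw [hlog]; linarith
      · rw [hlog]; nlinarith
    have hmeasε : Measurable (fun y : ℝ => C * (1 - Real.log y)^(n-1)) :=
      ((measurable_const.sub Real.measurable_log).pow_const _).const_mul _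
    have hεint' : ∀ x : ℝ, 0 < x → x ≤ 1 → IntegrableOn
        (fun t => C * (1 - Real.log (x/t))^(n-1) * Real.exp (-t) / t) (Ioi x) := by
      intro x hx0 hx1
      refine Integrable.mono' (((int_B (n-1)).mono_set
        (Ioi_subset_Ioi hx0.le)).const_mul (C * (1 - Real.log x)^(n-1) / x)) ?_ ?_
      · exact ((hmeasε.comp (measurable_const.div measurable_id)).mul
          (Real.continuous_exp.comp continuous_neg).measurable).div measurable_id
          |>.aestronglyMeasurable
      · filter_upwards [ae_restrict_mem measurableSet_Ioi] with t ht
        have hxt : x < t := ht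
        have ht0 : 0 < t := lt_trans hx0 hxt
        obtain ⟨k1, k2⟩ := key x t hx0 hx1 hxt
        have hlx : Real.log x ≤ 0 := Real.log_nonpos hx0.le hx1
        have hp : (1 - Real.log (x/t))^(n-1) ≤ (1 - Real.log x)^(n-1) * (1+t)^(n-1) := by
          rw [← mul_pow]
          exact pow_le_pow_left₀ k1 k2 _
        rw [Real.norm_eq_abs, abs_of_nonneg (by
          exact div_nonneg (mul_nonneg (mul_nonneg hC (pow_nonneg k1 _))
            (Real.exp_pos _).le) ht0.le)]
        have hRnn : (0:ℝ) ≤ (1 - Real.log x)^(n-1) * (1+t)^(n-1) * Real.exp (-t) :=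
          mul_nonneg (mul_nonneg (pow_nonneg (by linarith) _)
            (pow_nonneg (by linarith) _)) (Real.exp_pos _).le
        calc C * (1 - Real.log (x/t))^(n-1) * Real.exp (-t) / t
            ≤ C * ((1 - Real.log x)^(n-1) * (1+t)^(n-1)) * Real.exp (-t) / x := by
              rw [div_le_div_iff₀ ht0 hx0]
              have e1 : C * (1 - Real.log (x/t))^(n-1) * Real.exp (-t)
                  ≤ C * ((1 - Real.log x)^(n-1) * (1+t)^(n-1)) * Real.exp (-t) := by
                have := mul_le_mul_of_nonneg_left hp hC
                nlinarith [Real.exp_pos (-t), mul_le_mul_of_nonneg_right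
                  (mul_le_mul_of_nonneg_left hp hC) (Real.exp_pos (-t)).le]
              calc C * (1 - Real.log (x/t))^(n-1) * Real.exp (-t) * x
                  ≤ C * ((1 - Real.log x)^(n-1) * (1+t)^(n-1)) * Real.exp (-t) * x :=
                    mul_le_mul_of_nonneg_right e1 hx0.le
                _ ≤ C * ((1 - Real.log x)^(n-1) * (1+t)^(n-1)) * Real.exp (-t) * t := by
                    have : (0:ℝ) ≤ C * ((1 - Real.log x)^(n-1) * (1+t)^(n-1)) * Real.exp (-t) := by
                      nlinarith
                    exact mul_le_mul_of_nonneg_left hxt.le this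
          _ = C * (1 - Real.log x)^(n-1) / x * ((1+t)^(n-1) * Real.exp (-t)) := by ring
    have hεbd' : ∀ x : ℝ, 0 < x → x ≤ 1 →
        (∫ t in Ioi x, C * (1 - Real.log (x/t))^(n-1) * Real.exp (-t) / t)
          ≤ (C * (2^(n-1) + K')) * (1 - Real.log x)^n := by
      intro x hx0 hx1
      have hlx : Real.log x ≤ 0 := Real.log_nonpos hx0.le hx1
      set F : ℝ → ℝ := fun t => C * (1 - Real.log (x/t))^(n-1) * Real.exp (-t) / t with hF
      have hFint : IntegrableOn F (Ioi x) := hεint' x hx0 hx1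
      have hFle : ∀ t : ℝ, x < t →
          F t ≤ C * ((1 - Real.log x)^(n-1) * (1+t)^(n-1)) * Real.exp (-t) / t := by
        intro t ht
        have ht0 : 0 < t := lt_trans hx0 ht
        obtain ⟨k1, k2⟩ := key x t hx0 hx1 ht
        have hp : (1 - Real.log (x/t))^(n-1) ≤ (1 - Real.log x)^(n-1) * (1+t)^(n-1) := by
          rw [← mul_pow]
          exact pow_le_pow_left₀ k1 k2 _
        have hnum := mul_le_mul_of_nonneg_right (mul_le_mul_of_nonneg_left hp hC)
          (Real.exp_pos (-t)).le
        exact (div_le_div_iff_of_pos_right ht0).2 hnum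
      have hsplit : (∫ t in Ioi x, F t) = (∫ t in Ioc x 1, F t) + ∫ t in Ioi (1:ℝ), F t := by
        rw [← setIntegral_union (Ioc_disjoint_Ioi le_rfl) measurableSet_Ioi
          (hFint.mono_set Ioc_subset_Ioi_self) (hFint.mono_set (Ioi_subset_Ioi hx1)),
          Ioc_union_Ioi_eq_Ioi hx1]
      set P := (1 - Real.log x)^(n-1) with hP
      have hPnn : (0:ℝ) ≤ P := pow_nonneg (by linarith) _
      have hP1 : (1:ℝ) ≤ 1 - Real.log x := by linarith
      have hcont : ContinuousOn (fun t : ℝ => 1/t) (Icc x 1) :=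
        ContinuousOn.div continuousOn_const continuousOn_id
          (fun t ht => ne_of_gt (lt_of_lt_of_le hx0 ht.1))
      have hint1t : IntegrableOn (fun t : ℝ => C * P * 2^(n-1) * (1/t)) (Ioc x 1) :=
        ((hcont.integrableOn_Icc).mono_set Ioc_subset_Icc_self).const_mul _
      have hB1 : (∫ t in Ioc x 1, F t) ≤ C * P * 2^(n-1) * (-Real.log x) := by
        have hmono := setIntegral_mono_on (hFint.mono_set Ioc_subset_Ioi_self) hint1t
          measurableSet_Ioc (fun t ht => ?_)
        · have hiv : (∫ t in Ioc x 1, (1:ℝ)/t) = -Real.log x := by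
            have h0 : (0:ℝ) ∉ uIcc x 1 := by
              rw [uIcc_of_le hx1]
              rintro ⟨h1, -⟩
              exact absurd h1 (not_le.2 hx0)
            have hiv' := integral_one_div h0
            rw [intervalIntegral.integral_of_le hx1] at hiv'
            rw [hiv', one_div, Real.log_inv]
          calc (∫ t in Ioc x 1, F t) ≤ ∫ t in Ioc x 1, C * P * 2^(n-1) * (1/t) := hmono
            _ = C * P * 2^(n-1) * ∫ t in Ioc x 1, (1:ℝ)/t := integral_const_mul _ _
            _ = C * P * 2^(n-1) * (-Real.log x) := by rw [hiv]
        · have ht0 : 0 < t := lt_trans hx0 ht.1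
          have ht2 : t ≤ 1 := ht.2
          have he1 : Real.exp (-t) ≤ 1 := Real.exp_le_one_iff.2 (by linarith)
          have hq : (1+t)^(n-1) ≤ 2^(n-1) := pow_le_pow_left₀ (by linarith) (by linarith) _
          calc F t ≤ C * (P * (1+t)^(n-1)) * Real.exp (-t) / t := hFle t ht.1
            _ ≤ C * P * 2^(n-1) * (1/t) := by
                rw [mul_one_div, div_le_div_iff₀ ht0 ht0]
                have hnn1 : (0:ℝ) ≤ (1+t)^(n-1) := pow_nonneg (by linarith) _
                nlinarith [mul_nonneg (mul_nonneg hC hPnn) hnn1,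
                  mul_nonneg (mul_nonneg (mul_nonneg hC hPnn) hnn1) ht0.le,
                  Real.exp_pos (-t),
                  mul_le_mul_of_nonneg_left hq (mul_nonneg hC hPnn),
                  mul_le_mul_of_nonneg_right (mul_le_mul_of_nonneg_left hq
                    (mul_nonneg hC hPnn)) ht0.le]
      have hint2t : IntegrableOn (fun t : ℝ => C * P * ((1+t)^(n-1) * Real.exp (-t)))
          (Ioi (1:ℝ)) :=
        ((int_B (n-1)).mono_set (Ioi_subset_Ioi zero_le_one)).const_mul _
      have hB2 : (∫ t in Ioi (1:ℝ), F t) ≤ C * P * K' := by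
        have hmono := setIntegral_mono_on (hFint.mono_set (Ioi_subset_Ioi hx1)) hint2t
          measurableSet_Ioi (fun t ht => ?_)
        · rw [integral_const_mul, ← hK'] at hmono
          exact hmono
        · have ht1 : (1:ℝ) < t := ht
          have ht0 : 0 < t := lt_trans one_pos ht1
          have hnn : (0:ℝ) ≤ C * P * ((1+t)^(n-1) * Real.exp (-t)) :=
            mul_nonneg (mul_nonneg hC hPnn) (mul_nonneg (pow_nonneg (by linarith) _)
              (Real.exp_pos _).le)
          calc F t ≤ C * (P * (1+t)^(n-1)) * Real.exp (-t) / t := hFle t (lt_of_le_of_lt hx1 ht1)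
            _ = C * P * ((1+t)^(n-1) * Real.exp (-t)) / t := by ring_nf
            _ ≤ C * P * ((1+t)^(n-1) * Real.exp (-t)) := div_le_self hnn ht1.le
      have hpown : (1 - Real.log x)^n = P * (1 - Real.log x) := by
        rw [hP, ← pow_succ]
        congr 1
        omega
      rw [hsplit, hpown]
      have e1 : C * P * 2^(n-1) * (-Real.log x) ≤ C * 2^(n-1) * (P * (1 - Real.log x)) := by
        have h2n : (0:ℝ) ≤ 2^(n-1) := by positivity
        nlinarith [mul_nonneg (mul_nonneg hC hPnn) h2n]
      have e2 : C * P * K' ≤ C * K' * (P * (1 - Real.log x)) := by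
        nlinarith [mul_nonneg (mul_nonneg hC hPnn) hK'nn]
      nlinarith [hB1, hB2]
    have h := mg_step n (fun y => C * (1 - Real.log y)^(n-1)) hmeasε (C * (2^(n-1) + K'))
      (fun y hy0 hy1 => hCb y hy0 hy1) hεint' hεbd'
    obtain ⟨C', hC', hC'b⟩ := h
    exact ⟨C', hC', by simpa using hC'b⟩

lemma main_est (j k : ℕ) (hj : 1 ≤ j) (hk : 1 ≤ k) :
    ∃ C : ℝ, 0 ≤ C ∧ ∀ z : ℝ, 0 < z → z ≤ 1 →
      |(∫ u in Ioc (0:ℝ) z, meijerG00 k u * u^(j-1))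
          - (0 - Real.log z)^k * z^j / (j * Nat.factorial k)|
        ≤ C * (z^j * (1 - Real.log z)^(k-1)) := by
  obtain ⟨C, hC, hCb⟩ := mg_log_bound k hk
  have hCb' : ∀ u : ℝ, 0 < u → u ≤ 1 →
      |meijerG00 k u - (0 - Real.log u)^k / (Nat.factorial k)| ≤ C * (1 - Real.log u)^(k-1) := by
    intro u h1 h2
    have := hCb u h1 h2
    simpa [zero_sub] using this
  obtain ⟨C₂, hC₂, hC₂b⟩ := T_bound j hj 1 zero_le_one le_rfl (k-1)
  obtain ⟨C₃, hC₃, hC₃b⟩ := T_bound j hj 0 le_rfl zero_le_one (k-1)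
  refine ⟨k * C₃ + C * C₂, by positivity, fun z hz0 hz1 => ?_⟩
  have hlz : Real.log z ≤ 0 := Real.log_nonpos hz0.le hz1
  have hfac1 : (1:ℝ) ≤ (Nat.factorial k : ℝ) := by
    exact_mod_cast Nat.one_le_iff_ne_zero.2 (Nat.factorial_ne_zero k)
  have hfac0 : (0:ℝ) < (Nat.factorial k : ℝ) := by linarith
  have hj1 : (1:ℝ) ≤ (j:ℝ) := by exact_mod_cast hj
  -- integrability of the meijer integrand
  have hint_meijer : IntegrableOn (fun u => meijerG00 k u * u^(j-1)) (Ioc (0:ℝ) z) := by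
    refine Integrable.mono' (((int_log_pow k).mono_set
      (Ioc_subset_Ioc_right hz1)).const_mul (1 + C)) ?_ ?_
    · exact ((mg_meas k).mul (measurable_id.pow_const _)).aestronglyMeasurable
    · filter_upwards [ae_restrict_mem measurableSet_Ioc] with u hu
      have hu0 : 0 < u := hu.1
      have hu1 : u ≤ 1 := hu.2.trans hz1
      have hlu : Real.log u ≤ 0 := Real.log_nonpos hu0.le hu1
      have hb1 : (1:ℝ) ≤ 1 - Real.log u := by linarith
      have h1 := hCb' u hu0 hu1
      have h2 : meijerG00 k u ≤ (0 - Real.log u)^k / (Nat.factorial k)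
          + C * (1 - Real.log u)^(k-1) := by
        have := abs_le.1 h1
        linarith [this.2]
      have h3 : (0 - Real.log u)^k / (Nat.factorial k) ≤ (1 - Real.log u)^k := by
        have hp : (0 - Real.log u)^k ≤ (1 - Real.log u)^k :=
          pow_le_pow_left₀ (by linarith) (by linarith) k
        have hnn : (0:ℝ) ≤ (0 - Real.log u)^k := pow_nonneg (by linarith) k
        rw [div_le_iff₀ hfac0]
        nlinarith [pow_nonneg (show (0:ℝ) ≤ 1 - Real.log u by linarith) k]
      have h4 : (1 - Real.log u)^(k-1) ≤ (1 - Real.log u)^k :=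
        pow_le_pow_right₀ hb1 (by omega)
      have h5 : u^(j-1) ≤ 1 := pow_le_one₀ hu0.le hu1
      rw [Real.norm_eq_abs, abs_of_nonneg (mul_nonneg (mg_nonneg k u) (pow_nonneg hu0.le _))]
      calc meijerG00 k u * u^(j-1) ≤ meijerG00 k u * 1 :=
            mul_le_mul_of_nonneg_left h5 (mg_nonneg k u)
        _ = meijerG00 k u := mul_one _
        _ ≤ (1 + C) * (1 - Real.log u)^k := by nlinarith [mul_le_mul_of_nonneg_left h4 hC]
  have hint_T : IntegrableOn (fun u : ℝ => u^(j-1) * (0 - Real.log u)^k / (Nat.factorial k))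
      (Ioc (0:ℝ) z) :=
    ((int_T j k 0 le_rfl zero_le_one).mono_set (Ioc_subset_Ioc_right hz1)).div_const _
  have hint_T1 : IntegrableOn (fun u : ℝ => u^(j-1) * (1 - Real.log u)^(k-1))
      (Ioc (0:ℝ) z) :=
    (int_T j (k-1) 1 zero_le_one le_rfl).mono_set (Ioc_subset_Ioc_right hz1)
  have hint_E : IntegrableOn
      (fun u => (meijerG00 k u - (0 - Real.log u)^k / (Nat.factorial k)) * u^(j-1))
      (Ioc (0:ℝ) z) := by
    have h := hint_meijer.sub hint_T
    refine IntegrableOn.congr_fun h (fun u _ => ?_) measurableSet_Ioc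
    simp only [Pi.sub_apply]
    ring
  -- decomposition
  have hsum : (∫ u in Ioc (0:ℝ) z, meijerG00 k u * u^(j-1))
      = (∫ u in Ioc (0:ℝ) z, u^(j-1) * (0 - Real.log u)^k) / (Nat.factorial k)
        + ∫ u in Ioc (0:ℝ) z,
            (meijerG00 k u - (0 - Real.log u)^k / (Nat.factorial k)) * u^(j-1) := by
    rw [← integral_div, ← integral_add hint_T hint_E]
    refine setIntegral_congr_fun measurableSet_Ioc (fun u _ => ?_)
    ring
  set Tk := ∫ u in Ioc (0:ℝ) z, u^(j-1) * (0 - Real.log u)^k with hTk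
  set Tk1 := ∫ u in Ioc (0:ℝ) z, u^(j-1) * (0 - Real.log u)^(k-1) with hTk1
  set EI := ∫ u in Ioc (0:ℝ) z,
      (meijerG00 k u - (0 - Real.log u)^k / (Nat.factorial k)) * u^(j-1) with hEI
  have hid := T_ident j hj 0 le_rfl zero_le_one k hz0 hz1
  rw [← hTk, ← hTk1] at hid
  obtain ⟨hT3nn, hT3b⟩ := hC₃b z hz0 hz1
  rw [← hTk1] at hT3nn hT3b
  -- bound on main deviation
  have hdev : |Tk / (Nat.factorial k) - (0 - Real.log z)^k * z^j / (j * Nat.factorial k)|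
      ≤ k * C₃ * (z^j * (1 - Real.log z)^(k-1)) := by
    have hjne : (j:ℝ) ≠ 0 := by linarith
    have hfne : (Nat.factorial k:ℝ) ≠ 0 := by linarith
    have heq : Tk / (Nat.factorial k) - (0 - Real.log z)^k * z^j / (j * Nat.factorial k)
        = (k:ℝ) * Tk1 / ((j:ℝ) * Nat.factorial k) := by
      have hTk_eq : Tk = (z^j * (0 - Real.log z)^k + k * Tk1) / j := by
        rw [eq_div_iff hjne]
        linarith
      rw [hTk_eq]
      field_simp
      ring
    rw [heq, abs_div, abs_of_nonneg (mul_nonneg (Nat.cast_nonneg k) hT3nn),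
      abs_of_pos (by positivity : (0:ℝ) < (j:ℝ) * Nat.factorial k)]
    have hden : (1:ℝ) ≤ (j:ℝ) * Nat.factorial k := by nlinarith
    have hnum : (k:ℝ) * Tk1 ≤ (k:ℝ) * (C₃ * (z^j * (1 - Real.log z)^(k-1))) :=
      mul_le_mul_of_nonneg_left hT3b (Nat.cast_nonneg k)
    calc (k:ℝ) * Tk1 / ((j:ℝ) * Nat.factorial k) ≤ (k:ℝ) * Tk1 / 1 := by
          apply div_le_div_of_nonneg_left (mul_nonneg (Nat.cast_nonneg k) hT3nn) one_pos hden
      _ = (k:ℝ) * Tk1 := div_one _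
      _ ≤ k * C₃ * (z^j * (1 - Real.log z)^(k-1)) := by nlinarith
  -- bound on error integral
  have hEb : |EI| ≤ C * C₂ * (z^j * (1 - Real.log z)^(k-1)) := by
    have h1 : |EI| ≤ ∫ u in Ioc (0:ℝ) z,
        |(meijerG00 k u - (0 - Real.log u)^k / (Nat.factorial k)) * u^(j-1)| := by
      have hni := norm_integral_le_integral_norm
        (μ := volume.restrict (Ioc (0:ℝ) z))
        (f := fun u => (meijerG00 k u - (0 - Real.log u)^k / (Nat.factorial k)) * u^(j-1))
      simp only [Real.norm_eq_abs] at hni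
      exact hni
    have h2 : (∫ u in Ioc (0:ℝ) z,
        |(meijerG00 k u - (0 - Real.log u)^k / (Nat.factorial k)) * u^(j-1)|)
        ≤ ∫ u in Ioc (0:ℝ) z, C * (u^(j-1) * (1 - Real.log u)^(k-1)) := by
      refine integral_mono_of_nonneg (Eventually.of_forall (fun u => abs_nonneg _))
        (hint_T1.const_mul C) ?_
      filter_upwards [ae_restrict_mem measurableSet_Ioc] with u hu
      have hu0 : 0 < u := hu.1
      have hu1 : u ≤ 1 := hu.2.trans hz1
      rw [abs_mul, abs_of_nonneg (pow_nonneg hu0.le _)]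
      have h3 := hCb' u hu0 hu1
      have h5 : u^(j-1) ≤ 1 := pow_le_one₀ hu0.le hu1
      have h6 : (0:ℝ) ≤ u^(j-1) := pow_nonneg hu0.le _
      calc |meijerG00 k u - (0 - Real.log u)^k / (Nat.factorial k)| * u^(j-1)
          ≤ (C * (1 - Real.log u)^(k-1)) * u^(j-1) := mul_le_mul_of_nonneg_right h3 h6
        _ = C * (u^(j-1) * (1 - Real.log u)^(k-1)) := by ring
    have h4 : (∫ u in Ioc (0:ℝ) z, C * (u^(j-1) * (1 - Real.log u)^(k-1)))
        = C * ∫ u in Ioc (0:ℝ) z, u^(j-1) * (1 - Real.log u)^(k-1) := integral_const_mul _ _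
    obtain ⟨hS0, hSb⟩ := hC₂b z hz0 hz1
    calc |EI| ≤ ∫ u in Ioc (0:ℝ) z,
          |(meijerG00 k u - (0 - Real.log u)^k / (Nat.factorial k)) * u^(j-1)| := h1
      _ ≤ ∫ u in Ioc (0:ℝ) z, C * (u^(j-1) * (1 - Real.log u)^(k-1)) := h2
      _ = C * ∫ u in Ioc (0:ℝ) z, u^(j-1) * (1 - Real.log u)^(k-1) := h4
      _ ≤ C * (C₂ * (z^j * (1 - Real.log z)^(k-1))) := mul_le_mul_of_nonneg_left hSb hC
      _ = C * C₂ * (z^j * (1 - Real.log z)^(k-1)) := by ring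
  rw [hsum]
  have : Tk / (Nat.factorial k) + EI - (0 - Real.log z)^k * z^j / ((j:ℝ) * Nat.factorial k)
      = (Tk / (Nat.factorial k) - (0 - Real.log z)^k * z^j / ((j:ℝ) * Nat.factorial k)) + EI := by
    ring
  rw [this]
  calc |(Tk / (Nat.factorial k) - (0 - Real.log z)^k * z^j / ((j:ℝ) * Nat.factorial k)) + EI|
      ≤ |Tk / (Nat.factorial k) - (0 - Real.log z)^k * z^j / ((j:ℝ) * Nat.factorial k)| + |EI| :=
        abs_add_le _ _
    _ ≤ k * C₃ * (z^j * (1 - Real.log z)^(k-1)) + C * C₂ * (z^j * (1 - Real.log z)^(k-1)) :=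
        add_le_add hdev hEb
    _ = (k * C₃ + C * C₂) * (z^j * (1 - Real.log z)^(k-1)) := by ring

/-- Small-argument asymptotics: for `m ≥ 1`, `j ≥ 1`, as `z → 0⁺`,
`G^{m,1}_{1,m+1}(1; j,…,j, 0 | z)
 = ((-1)^{m-1}/(j (m-1)!)) (log z)^{m-1} z^j + O((log z)^{m-2} z^j)` for `m ≥ 2`,
and `= (1/j) z^j + O(z^{j+1})` for `m = 1`. -/
theorem meijerGj_asymptotics_zero (m j : ℕ) (hm : 1 ≤ m) (hj : 1 ≤ j) :
    (m = 1 →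
      (fun z : ℝ => meijerGj 1 j z - (1 / (j : ℝ)) * z ^ j)
        =O[nhdsWithin 0 (Set.Ioi 0)] fun z : ℝ => z ^ (j + 1))
    ∧ (2 ≤ m →
      (fun z : ℝ => meijerGj m j z
          - ((-1 : ℝ) ^ (m - 1) / (j * (Nat.factorial (m - 1) : ℝ)))
            * Real.log z ^ (m - 1) * z ^ j)
        =O[nhdsWithin 0 (Set.Ioi 0)] fun z : ℝ => Real.log z ^ (m - 2) * z ^ j) := by
  constructor
  · intro _
    rw [Asymptotics.isBigO_iff]
    refine ⟨1, ?_⟩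
    filter_upwards [Ioc_mem_nhdsGT_of_mem
      (show (0:ℝ) ∈ Ico (0:ℝ) 1 from ⟨le_rfl, one_pos⟩)] with z hz
    have hz0 : 0 < z := hz.1
    have hz1 : z ≤ 1 := hz.2
    have hjr : (1:ℝ) ≤ (j:ℝ) := by exact_mod_cast hj
    have hcont : Continuous fun u : ℝ => Real.exp (-u) * u^(j-1) :=
      (Real.continuous_exp.comp continuous_neg).mul (continuous_pow _)
    have hcont2 : Continuous fun u : ℝ => (u:ℝ)^(j-1) := continuous_pow _
    have hGj : meijerGj 1 j z = ∫ u in (0:ℝ)..z, Real.exp (-u) * u^(j-1) := rfl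
    have hcast : ((j - 1 : ℕ) : ℝ) + 1 = (j:ℝ) := by
      rw [Nat.cast_sub hj]
      push_cast
      ring
    have hpow : (∫ u in (0:ℝ)..z, (u:ℝ)^(j-1)) = z^j / j := by
      rw [integral_pow, zero_pow (show j - 1 + 1 ≠ 0 by omega),
        show j - 1 + 1 = j from by omega, hcast, sub_zero]
    have h1j : (1/(j:ℝ)) * z^j = ∫ u in (0:ℝ)..z, (u:ℝ)^(j-1) := by
      rw [hpow]
      ring
    have hsub : meijerGj 1 j z - (1/(j:ℝ)) * z^j
        = ∫ u in (0:ℝ)..z, (Real.exp (-u) - 1) * u^(j-1) := by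
      rw [hGj, h1j, ← intervalIntegral.integral_sub (hcont.intervalIntegrable _ _)
        (hcont2.intervalIntegrable _ _)]
      refine intervalIntegral.integral_congr (fun u _ => ?_)
      ring
    rw [hsub]
    have hb : ∀ᵐ t ∂(volume.restrict (Set.uIoc (0:ℝ) z)), ‖(Real.exp (-t) - 1) * t^(j-1)‖ ≤ t^j := by
      rw [uIoc_of_le hz0.le]
      filter_upwards [ae_restrict_mem measurableSet_Ioc] with t ht
      have ht0 : 0 < t := ht.1
      have he1 : Real.exp (-t) ≤ 1 := Real.exp_le_one_iff.2 (by linarith)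
      have he2 : 1 - t ≤ Real.exp (-t) := by nlinarith [Real.add_one_le_exp (-t)]
      have habs : |Real.exp (-t) - 1| ≤ t := by
        rw [abs_sub_comm, abs_of_nonneg (by linarith)]
        linarith
      rw [Real.norm_eq_abs, abs_mul, abs_of_nonneg (pow_nonneg ht0.le _)]
      calc |Real.exp (-t) - 1| * t^(j-1) ≤ t * t^(j-1) :=
            mul_le_mul_of_nonneg_right habs (pow_nonneg ht0.le _)
        _ = t^j := by
            rw [← pow_succ', show j - 1 + 1 = j from by omega]
    have hgi : IntervalIntegrable (fun t : ℝ => t^j) volume 0 z :=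
      (continuous_pow j).intervalIntegrable _ _
    have hbnd := intervalIntegral.norm_integral_le_of_norm_le hz0.le
      ((ae_restrict_iff' measurableSet_Ioc).1 (by rwa [uIoc_of_le hz0.le] at hb)) hgi
    have hint_pow : (∫ t in (0:ℝ)..z, t^j) = z^(j+1)/(j+1) := by
      rw [integral_pow, zero_pow (show j + 1 ≠ 0 by omega), sub_zero]
    rw [hint_pow] at hbnd
    have hple : z^(j+1)/((j:ℝ)+1) ≤ z^(j+1) := by
      have : (0:ℝ) < z^(j+1) := pow_pos hz0 _
      rw [div_le_iff₀ (by positivity)]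
      nlinarith
    rw [Real.norm_eq_abs, Real.norm_eq_abs]
    calc |∫ u in (0:ℝ)..z, (Real.exp (-u) - 1) * u^(j-1)|
        ≤ |z^(j+1)/((j:ℝ)+1)| := le_trans hbnd (le_abs_self _)
      _ = z^(j+1)/((j:ℝ)+1) := abs_of_nonneg (by positivity)
      _ ≤ z^(j+1) := hple
      _ ≤ 1 * |z^(j+1)| := by
          rw [one_mul, abs_of_nonneg (by positivity)]
  · intro hm2
    obtain ⟨k, rfl⟩ : ∃ k, m = k + 1 := ⟨m - 1, by omega⟩
    have hk : 1 ≤ k := by omega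
    obtain ⟨C, hC, hCb⟩ := main_est j k hj hk
    simp only [Nat.add_sub_cancel, show k + 1 - 2 = k - 1 from by omega]
    rw [Asymptotics.isBigO_iff]
    refine ⟨C * 2^(k-1), ?_⟩
    have hr1 : Real.exp (-1:ℝ) < 1 := by
      rw [Real.exp_lt_one_iff]
      norm_num
    filter_upwards [Ioc_mem_nhdsGT_of_mem
      (show (0:ℝ) ∈ Ico (0:ℝ) (Real.exp (-1)) from ⟨le_rfl, Real.exp_pos _⟩)] with z hz
    have hz0 : 0 < z := hz.1
    have hz1 : z ≤ 1 := hz.2.trans hr1.le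
    have hlz : Real.log z ≤ -1 := by
      have := Real.log_le_log hz0 hz.2
      rwa [Real.log_exp] at this
    have hGj : meijerGj (k+1) j z = ∫ u in Ioc (0:ℝ) z, meijerG00 k u * u^(j-1) := by
      show (∫ u in (0:ℝ)..z, meijerG00 (k+1-1) u * u^(j-1)) = _
      rw [Nat.add_sub_cancel, intervalIntegral.integral_of_le hz0.le]
    have hcoef : ((-1:ℝ))^k / ((j:ℝ) * (Nat.factorial k : ℝ)) * Real.log z ^ k * z^j
        = (0 - Real.log z)^k * z^j / ((j:ℝ) * Nat.factorial k) := by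
      rw [zero_sub, neg_pow]
      ring
    rw [hGj, hcoef]
    have hmain := hCb z hz0 hz1
    have hfac : (1 - Real.log z)^(k-1) ≤ 2^(k-1) * (0 - Real.log z)^(k-1) := by
      rw [← mul_pow]
      exact pow_le_pow_left₀ (by linarith) (by linarith) _
    have hznn : (0:ℝ) ≤ z^j := pow_nonneg hz0.le _
    have hnorm : ‖Real.log z ^ (k-1) * z^j‖ = (0 - Real.log z)^(k-1) * z^j := by
      rw [Real.norm_eq_abs, abs_mul, abs_pow, abs_of_nonpos (by linarith : Real.log z ≤ 0),
        abs_of_nonneg hznn, zero_sub]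
    rw [Real.norm_eq_abs, hnorm]
    calc |(∫ u in Ioc (0:ℝ) z, meijerG00 k u * u^(j-1))
          - (0 - Real.log z)^k * z^j / ((j:ℝ) * Nat.factorial k)|
        ≤ C * (z^j * (1 - Real.log z)^(k-1)) := hmain
      _ ≤ C * (z^j * (2^(k-1) * (0 - Real.log z)^(k-1))) := by
          refine mul_le_mul_of_nonneg_left (mul_le_mul_of_nonneg_left hfac hznn) hC
      _ = C * 2^(k-1) * ((0 - Real.log z)^(k-1) * z^j) := by ring
end
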